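/- arXiv:1010.5647 — 5 statements merged into one kernel-verified Lean document; each statement's English description precedes it below -/
import Mathlib

section
/- Let h : (a,b) → ℝ be C^k with h'(x) ≠ 0 for all x ∈ (a,b), and suppose h has an inverse h⁻¹ : h((a,b)) → (a,b). Then for all x ∈ (a,b) and 1 ≤ l ≤ k, the l-th derivative of the inverse satisfies (h⁻¹)^{(l)}(h(x)) = Σ_{m=0}^{l-1} ((-1)^m / m!) (h'(x))^{-l-m} Σ_{b ∈ ℕ^m} ((l-1+m)! / (b₁!⋯b_m!)) h^{(b₁)}(x) ⋯ h^{(b_m)}(x), where the inner sum runs over tuples b = (b₁,…,b_m) with b₁+⋯+b_m = l-1+m and each b_i ≥ 2. -/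
/-!
Write `F_n(h', h'', …)` for the right-hand side at `l = n + 1`, with inner sums `S_n(m)`.
Since `g ∘ h = id` near `x`, the inverse function theorem makes `g` a `C^k` function near `h x`,
and differentiating `g^{(n+1)} ∘ h = F_n(h', h'', …)` gives `g^{(n+2)}(h x) h'(x) = (F_n)'(x)`.
So the induction reduces to the identity `(F_n)' = h' F_{n+1}`, which in turn rests on the
recursion `S_{n+1}(m+1) = S_n(m+1)' + (m+1)(n+m+1) h'' S_n(m)`. To see the recursion, split the
multinomial coefficient of a tuple as `(N+1)!/∏ bᵢ! = ∑ᵢ bᵢ N!/∏ bⱼ!`: in the term of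
index `i` either `bᵢ ≥ 3`, and lowering `bᵢ` by one gives a term of the derivative, or `bᵢ = 2`,
and deleting `bᵢ` gives a term of `S_n(m)`.
-/

section InverseDerivative

open Finset Filter Topology

def twoLeTuples (n m : ℕ) : Finset (Fin m → ℕ) :=
  (Finset.Nat.antidiagonalTuple m (n + m)).filter fun c => ∀ i, 2 ≤ c i

section Tuples

variable {n m : ℕ} {c : Fin m → ℕ}

theorem mem_twoLeTuples : c ∈ twoLeTuples n m ↔ ∑ i, c i = n + m ∧ ∀ i, 2 ≤ c i := by
  simp [twoLeTuples, Finset.Nat.mem_antidiagonalTuple]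

theorem two_mul_card_le_sum (hc : ∀ i, 2 ≤ c i) (s : Finset (Fin m)) :
    2 * #s ≤ ∑ i ∈ s, c i := by
  simpa [mul_comm] using Finset.card_nsmul_le_sum s c 2 fun i _ => hc i

theorem twoLeTuples_eq_empty (h : n < m) : twoLeTuples n m = ∅ := by
  refine Finset.eq_empty_of_forall_notMem fun c hc => ?_
  obtain ⟨hsum, hc⟩ := mem_twoLeTuples.1 hc
  have := two_mul_card_le_sum hc univ
  simp only [card_univ, Fintype.card_fin] at this
  omega

theorem le_of_mem_twoLeTuples (hc : c ∈ twoLeTuples n m) (i : Fin m) : c i ≤ n + 1 := by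
  obtain ⟨hsum, hc⟩ := mem_twoLeTuples.1 hc
  have hrest := two_mul_card_le_sum hc (univ.erase i)
  rw [card_erase_of_mem (mem_univ i), card_univ, Fintype.card_fin] at hrest
  have := add_sum_erase univ c (mem_univ i)
  have := i.pos
  omega

theorem twoLeTuples_zero_zero : twoLeTuples 0 0 = {![]} := by
  ext c
  simp [mem_twoLeTuples, Subsingleton.elim c ![]]

theorem twoLeTuples_succ_zero : twoLeTuples (n + 1) 0 = ∅ := by
  ext c
  simp [mem_twoLeTuples]

theorem update_pred_mem_twoLeTuples (hc : c ∈ twoLeTuples (n + 1) m) {i : Fin m}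
    (hi : 3 ≤ c i) : Function.update c i (c i - 1) ∈ twoLeTuples n m := by
  obtain ⟨hsum, hc⟩ := mem_twoLeTuples.1 hc
  refine mem_twoLeTuples.2 ⟨?_, fun j => ?_⟩
  · rw [sum_update_of_mem (mem_univ i), ← erase_eq]
    have := add_sum_erase univ c (mem_univ i)
    omega
  · rcases eq_or_ne j i with rfl | hj
    · simp only [Function.update_self]; omega
    · simp only [Function.update_of_ne hj, hc j]

theorem update_succ_mem_twoLeTuples (hc : c ∈ twoLeTuples n m) (i : Fin m) :
    Function.update c i (c i + 1) ∈ twoLeTuples (n + 1) m := by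
  obtain ⟨hsum, hc⟩ := mem_twoLeTuples.1 hc
  refine mem_twoLeTuples.2 ⟨?_, fun j => ?_⟩
  · rw [sum_update_of_mem (mem_univ i), ← erase_eq]
    have := add_sum_erase univ c (mem_univ i)
    omega
  · rcases eq_or_ne j i with rfl | hj
    · simp only [Function.update_self]; have := hc j; omega
    · simp only [Function.update_of_ne hj, hc j]

theorem removeNth_mem_twoLeTuples {c : Fin (m + 1) → ℕ} (hc : c ∈ twoLeTuples (n + 1) (m + 1))
    {i : Fin (m + 1)} (hi : c i = 2) : i.removeNth c ∈ twoLeTuples n m := by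
  obtain ⟨hsum, hc⟩ := mem_twoLeTuples.1 hc
  rw [Fin.sum_univ_succAbove c i, hi] at hsum
  exact mem_twoLeTuples.2 ⟨by simp only [Fin.removeNth]; omega, fun j => hc _⟩

theorem insertNth_two_mem_twoLeTuples (hc : c ∈ twoLeTuples n m) (i : Fin (m + 1)) :
    i.insertNth 2 c ∈ twoLeTuples (n + 1) (m + 1) := by
  obtain ⟨hsum, hc⟩ := mem_twoLeTuples.1 hc
  refine mem_twoLeTuples.2 ⟨?_, fun j => ?_⟩
  · rw [Fin.sum_univ_succAbove _ i]
    simp only [Fin.insertNth_apply_same, Fin.insertNth_apply_succAbove]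
    omega
  · induction j using Fin.succAboveCases i with
    | x => simp
    | p j => simp [hc j]

theorem filter_piFinset_range_eq_twoLeTuples {n m B : ℕ} (hB : n + m < B) :
    (Fintype.piFinset fun _ : Fin m => range B).filter
      (fun c : Fin m → ℕ => ∑ i, c i = n + m ∧ ∀ i, 2 ≤ c i) = twoLeTuples n m := by
  ext c
  simp only [mem_filter, Fintype.mem_piFinset, mem_range, mem_twoLeTuples,
    and_iff_right_iff_imp]
  rintro ⟨hsum, -⟩ i
  have := single_le_sum (fun j _ => Nat.zero_le (c j)) (mem_univ i)
  omega

end Tuples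

section BellSum

open Nat

variable {K : Type*} [Field K] (v : ℕ → K)

/-- `m!` times the partial Bell polynomial `B_{n+m,m}(0, v 2, v 3, …)`. -/
def bellSum (n m : ℕ) : K :=
  ∑ c ∈ twoLeTuples n m, ((n + m)! / ∏ i, ((c i)! : K)) * ∏ i, v (c i)

/-- The derivative of `bellSum v n m` when each `v j` has derivative `v (j + 1)`. -/
def bellSumDeriv (n m : ℕ) : K :=
  ∑ c ∈ twoLeTuples n m, ((n + m)! / ∏ i, ((c i)! : K)) *
    ∑ i, (∏ j ∈ univ.erase i, v (c j)) * v (c i + 1)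

theorem bellSum_zero_zero : bellSum v 0 0 = 1 := by
  simp [bellSum, twoLeTuples_zero_zero]

theorem bellSum_succ_zero (n : ℕ) : bellSum v (n + 1) 0 = 0 := by
  simp [bellSum, twoLeTuples_succ_zero]

theorem bellSumDeriv_zero (n : ℕ) : bellSumDeriv v n 0 = 0 := by
  simp [bellSumDeriv]

theorem bellSumDeriv_succ_self (n : ℕ) : bellSumDeriv v n (n + 1) = 0 := by
  simp [bellSumDeriv, twoLeTuples_eq_empty (Nat.lt_succ_self n)]

variable [CharZero K]

theorem bellSum_succ_succ_eq_sum_pairs (n m : ℕ) :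
    bellSum v (n + 1) (m + 1) =
      ∑ p ∈ twoLeTuples (n + 1) (m + 1) ×ˢ (univ : Finset (Fin (m + 1))),
        (p.1 p.2 : K) * ((n + (m + 1))! / ∏ i, ((p.1 i)! : K)) * ∏ i, v (p.1 i) := by
  rw [sum_product]
  refine sum_congr rfl fun c hc => ?_
  have hsum : ∑ i, (c i : K) = n + (m + 1) + 1 := by
    exact_mod_cast (mem_twoLeTuples.1 hc).1.trans (by omega)
  simp only [← sum_mul, hsum]
  rw [show n + 1 + (m + 1) = n + (m + 1) + 1 by omega, factorial_succ]
  push_cast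
  ring

theorem prod_erase_update {M : Type*} [CommMonoid M] {m : ℕ} (f : ℕ → M) (c : Fin m → ℕ)
    (i : Fin m) (b : ℕ) :
    ∏ j ∈ univ.erase i, f (Function.update c i b j) = ∏ j ∈ univ.erase i, f (c j) :=
  prod_congr rfl fun j hj => by rw [Function.update_of_ne (ne_of_mem_erase hj)]

theorem prod_factorial_ne_zero {ι : Type*} (s : Finset ι) (d : ι → ℕ) :
    ∏ j ∈ s, ((d j)! : K) ≠ 0 :=
  prod_ne_zero_iff.2 fun _ _ => Nat.cast_ne_zero.2 (factorial_ne_zero _)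

theorem succ_mul_factorial_weight_update {m : ℕ} (N : ℕ) (d : Fin m → ℕ) (i : Fin m) :
    ((d i + 1 : ℕ) : K) * (N ! / ∏ j, ((Function.update d i (d i + 1) j)! : K)) *
        ∏ j, v (Function.update d i (d i + 1) j) =
      (N ! / ∏ j, ((d j)! : K)) * ((∏ j ∈ univ.erase i, v (d j)) * v (d i + 1)) := by
  rw [← mul_prod_erase _ (fun j => ((Function.update d i (d i + 1) j)! : K)) (mem_univ i),
    ← mul_prod_erase _ (fun j => v (Function.update d i (d i + 1) j)) (mem_univ i),
    ← mul_prod_erase _ (fun j => ((d j)! : K)) (mem_univ i)]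
  simp only [Function.update_self, prod_erase_update v, prod_erase_update (fun k => (k ! : K)),
    factorial_succ]
  have := prod_factorial_ne_zero (K := K) (univ.erase i) d
  push_cast
  field_simp

theorem sum_filter_three_le_eq_bellSumDeriv (n m : ℕ) :
    ∑ p ∈ (twoLeTuples (n + 1) m ×ˢ (univ : Finset (Fin m))).filter (fun p => 3 ≤ p.1 p.2),
      (p.1 p.2 : K) * ((n + m)! / ∏ i, ((p.1 i)! : K)) * ∏ i, v (p.1 i) =
    bellSumDeriv v n m := by
  simp only [bellSumDeriv, mul_sum]
  rw [← sum_product']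
  refine (sum_nbij' (fun q => (Function.update q.1 q.2 (q.1 q.2 + 1), q.2))
    (fun p => (Function.update p.1 p.2 (p.1 p.2 - 1), p.2)) ?_ ?_ ?_ ?_ ?_).symm
  · rintro ⟨d, i⟩ hq
    simp only [mem_product, mem_univ, and_true, mem_filter, Function.update_self]
      at hq ⊢
    exact ⟨update_succ_mem_twoLeTuples hq i, by have := (mem_twoLeTuples.1 hq).2 i; omega⟩
  · rintro ⟨c, i⟩ hp
    simp only [mem_product, mem_univ, and_true, mem_filter] at hp ⊢
    exact update_pred_mem_twoLeTuples hp.1 hp.2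
  · rintro ⟨d, i⟩ -
    simp
  · rintro ⟨c, i⟩ hp
    simp only [mem_filter] at hp
    simp [Nat.sub_add_cancel (by omega : 1 ≤ c i)]
  · rintro ⟨d, i⟩ -
    simp only [Function.update_self]
    exact (succ_mul_factorial_weight_update v (n + m) d i).symm

theorem sum_filter_not_three_le_eq_bellSum (n m : ℕ) :
    ∑ p ∈ (twoLeTuples (n + 1) (m + 1) ×ˢ (univ : Finset (Fin (m + 1)))).filter
        (fun p => ¬ 3 ≤ p.1 p.2),
      (p.1 p.2 : K) * ((n + (m + 1))! / ∏ i, ((p.1 i)! : K)) * ∏ i, v (p.1 i) =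
    (m + 1) * (n + m + 1) * v 2 * bellSum v n m := by
  have hrhs : (m + 1) * (n + m + 1) * v 2 * bellSum v n m =
      ∑ q ∈ (univ : Finset (Fin (m + 1))) ×ˢ twoLeTuples n m,
        (n + m + 1) * ((n + m)! / ∏ i, ((q.2 i)! : K)) * (v 2 * ∏ i, v (q.2 i)) := by
    simp only [sum_product, sum_const, Finset.card_univ, Fintype.card_fin, nsmul_eq_mul]
    rw [bellSum, mul_sum, mul_sum]
    refine sum_congr rfl fun d _ => ?_
    push_cast
    ring
  rw [hrhs]
  refine (sum_nbij' (fun q => (q.1.insertNth 2 q.2, q.1)) (fun p => (p.2, p.2.removeNth p.1))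
    ?_ ?_ ?_ ?_ ?_).symm
  · rintro ⟨i, d⟩ hq
    simp only [mem_filter, mem_product, mem_univ,
      true_and, and_true, Fin.insertNth_apply_same] at hq ⊢
    exact ⟨insertNth_two_mem_twoLeTuples hq i, by omega⟩
  · rintro ⟨c, i⟩ hp
    simp only [mem_filter, mem_product, mem_univ, and_true, true_and] at hp ⊢
    exact removeNth_mem_twoLeTuples hp.1 (by have := (mem_twoLeTuples.1 hp.1).2 i; omega)
  · rintro ⟨i, d⟩ -
    simp
  · rintro ⟨c, i⟩ hp
    simp only [mem_filter, mem_product] at hp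
    have hci : c i = 2 := by have := (mem_twoLeTuples.1 hp.1.1).2 i; omega
    simp [← hci]
  · rintro ⟨i, d⟩ -
    have := prod_factorial_ne_zero (K := K) univ d
    simp only [Fin.prod_univ_succAbove _ i, Fin.insertNth_apply_same,
      Fin.insertNth_apply_succAbove, show n + (m + 1) = n + m + 1 by omega, factorial_succ]
    push_cast
    field_simp
    ring

theorem bellSum_succ_succ (n m : ℕ) :
    bellSum v (n + 1) (m + 1) =
      bellSumDeriv v n (m + 1) + (m + 1) * (n + m + 1) * v 2 * bellSum v n m := by
  rw [bellSum_succ_succ_eq_sum_pairs, ← sum_filter_add_sum_filter_not _ (fun p => 3 ≤ p.1 p.2),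
    sum_filter_three_le_eq_bellSumDeriv, sum_filter_not_three_le_eq_bellSum]

/-- The right-hand side of the formula for the `(n+1)`-st derivative of the inverse function,
with `v j` standing for `h^{(j)}(x)`. -/
def invDerivFormula (n : ℕ) : K :=
  ∑ m ∈ range (n + 1), (-1) ^ m / m ! * bellSum v n m / v 1 ^ (n + 1 + m)

theorem invDerivFormula_zero : invDerivFormula v 0 = (v 1)⁻¹ := by
  simp [invDerivFormula, bellSum_zero_zero]

theorem mul_invDerivFormula_succ (hv : v 1 ≠ 0) (n : ℕ) :
    v 1 * invDerivFormula v (n + 1) = ∑ m ∈ range (n + 1), (-1) ^ m / m ! *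
      (bellSumDeriv v n m / v 1 ^ (n + 1 + m) -
        (n + 1 + m) * v 2 * bellSum v n m / v 1 ^ (n + 2 + m)) := by
  set A : ℕ → K := fun m => (-1) ^ m / m ! * bellSumDeriv v n m / v 1 ^ (n + 1 + m) with hA
  have hshift : ∑ m ∈ range (n + 1), A m = ∑ m ∈ range (n + 1), A (m + 1) := by
    have h0 : A 0 = 0 := by simp [hA, bellSumDeriv_zero]
    have hlast : A (n + 1) = 0 := by simp [hA, bellSumDeriv_succ_self]
    have := (sum_range_succ A (n + 1)).symm.trans (sum_range_succ' A (n + 1))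
    rwa [h0, hlast, add_zero, add_zero] at this
  calc v 1 * invDerivFormula v (n + 1)
      = ∑ m ∈ range (n + 1), (A (m + 1) -
          (-1) ^ m / m ! * ((n + 1 + m) * v 2 * bellSum v n m / v 1 ^ (n + 2 + m))) := by
        rw [invDerivFormula, mul_sum, sum_range_succ']
        simp only [bellSum_succ_zero, mul_zero, zero_div, add_zero, bellSum_succ_succ, hA]
        refine sum_congr rfl fun m _ => ?_
        rw [factorial_succ]
        push_cast
        field_simp
        ring
    _ = _ := by
        rw [sum_sub_distrib, ← hshift, ← sum_sub_distrib]
        refine sum_congr rfl fun m _ => ?_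
        rw [hA]
        ring

end BellSum

section Calculus

variable {𝕜 : Type*} [NontriviallyNormedField 𝕜] {V : ℕ → 𝕜 → 𝕜} {x : 𝕜} {n : ℕ}

theorem hasDerivAt_bellSum (hV : ∀ j ≤ n + 1, HasDerivAt (V j) (V (j + 1) x) x) (m : ℕ) :
    HasDerivAt (fun t => bellSum (fun j => V j t) n m) (bellSumDeriv (fun j => V j x) n m) x := by
  refine HasDerivAt.fun_sum fun c hc => (HasDerivAt.fun_finsetProd fun i _ =>
    hV (c i) (le_of_mem_twoLeTuples hc i)).const_mul _ |>.congr_deriv ?_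
  simp only [smul_eq_mul, mul_comm]

theorem hasDerivAt_invDerivFormula [CharZero 𝕜]
    (hV : ∀ j ≤ n + 1, HasDerivAt (V j) (V (j + 1) x) x) (h1 : V 1 x ≠ 0) :
    HasDerivAt (fun t => invDerivFormula (fun j => V j t) n)
      (V 1 x * invDerivFormula (fun j => V j x) (n + 1)) x := by
  rw [mul_invDerivFormula_succ (fun j => V j x) h1]
  refine HasDerivAt.fun_sum fun m _ =>
    ((hasDerivAt_bellSum hV m).const_mul _).div ((hV 1 (by omega)).pow _) (pow_ne_zero _ h1)
    |>.congr_deriv ?_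
  rw [Pi.pow_apply, show n + 1 + m - 1 = n + m by omega]
  push_cast
  field_simp
  ring

end Calculus

theorem ContDiffAt.hasDerivAt_iteratedDeriv {𝕜 F : Type*} [NontriviallyNormedField 𝕜]
    [NormedAddCommGroup F] [NormedSpace 𝕜 F] {f : 𝕜 → F} {x : 𝕜} {k j : ℕ}
    (hf : ContDiffAt 𝕜 k f x) (hj : j < k) :
    HasDerivAt (iteratedDeriv j f) (iteratedDeriv (j + 1) f x) x := by
  rw [iteratedDeriv_succ]
  refine DifferentiableAt.hasDerivAt ?_
  have := hf.iteratedFDeriv_right (m := 1) (i := j) (by norm_cast; omega)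
  exact (this.differentiableAt one_ne_zero).continuousMultilinear_apply_const _

theorem ContDiffAt.of_local_left_inverse {𝕜 : Type*} [RCLike 𝕜] {f g : 𝕜 → 𝕜} {a : 𝕜}
    {n : WithTop ℕ∞} (hf : ContDiffAt 𝕜 n f a) (hn : n ≠ 0) (hf' : deriv f a ≠ 0)
    (hg : ∀ᶠ x in 𝓝 a, g (f x) = x) : ContDiffAt 𝕜 n g (f a) := by
  have hfd := ((hf.hasStrictDerivAt hn).hasStrictFDerivAt_equiv hf').hasFDerivAt
  exact (hf.to_localInverse hfd hn).congr_of_eventuallyEq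
    ((hf.hasStrictFDerivAt' hfd hn).localInverse_unique hg)

theorem iteratedDeriv_succ_eq_invDerivFormula {𝕜 : Type*} [RCLike 𝕜] {f g : 𝕜 → 𝕜} {s : Set 𝕜}
    {k : ℕ} (hs : IsOpen s) (hf : ContDiffOn 𝕜 k f s) (hf' : ∀ x ∈ s, deriv f x ≠ 0)
    (hg : ∀ x ∈ s, g (f x) = x) {n : ℕ} (hn : n + 1 ≤ k) {x : 𝕜} (hx : x ∈ s) :
    iteratedDeriv (n + 1) g (f x) = invDerivFormula (fun j => iteratedDeriv j f x) n := by
  induction n generalizing x with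
  | zero =>
    have hfx := hf.contDiffAt (hs.mem_nhds hx)
    rw [invDerivFormula_zero, iteratedDeriv_one, iteratedDeriv_one]
    exact ((hfx.hasStrictDerivAt (by simp; omega)).to_local_left_inverse (hf' x hx)
      (eventually_of_mem (hs.mem_nhds hx) hg)).hasDerivAt.deriv
  | succ n ih =>
    have hfx := hf.contDiffAt (hs.mem_nhds hx)
    have hgx : ContDiffAt 𝕜 k g (f x) :=
      hfx.of_local_left_inverse (by simp; omega) (hf' x hx)
        (eventually_of_mem (hs.mem_nhds hx) hg)
    have hjet : ∀ j ≤ n + 1, HasDerivAt (iteratedDeriv j f) (iteratedDeriv (j + 1) f x) x :=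
      fun j hj => hfx.hasDerivAt_iteratedDeriv (by omega)
    have hlhs : HasDerivAt (fun t => iteratedDeriv (n + 1) g (f t))
        (iteratedDeriv (n + 2) g (f x) * deriv f x) x :=
      (hgx.hasDerivAt_iteratedDeriv (by omega)).comp x
        (hfx.differentiableAt (by simp; omega)).hasDerivAt
    have hrhs : HasDerivAt (fun t => iteratedDeriv (n + 1) g (f t))
        (deriv f x * invDerivFormula (fun j => iteratedDeriv j f x) (n + 1)) x := by
      rw [← iteratedDeriv_one]
      exact (hasDerivAt_invDerivFormula hjet (by rw [iteratedDeriv_one]; exact hf' x hx))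
        |>.congr_of_eventuallyEq (eventually_of_mem (hs.mem_nhds hx) fun t ht => ih (by omega) ht)
    exact mul_right_cancel₀ (hf' x hx) ((hlhs.unique hrhs).trans (mul_comm _ _))

end InverseDerivative

open Set

theorem inverse_function_higher_deriv_general
    (a b : ℝ) (k : ℕ) (h g : ℝ → ℝ)
    (hsm : ContDiffOn ℝ k h (Ioo a b))
    (hd : ∀ x ∈ Ioo a b, deriv h x ≠ 0)
    (hg : ∀ x ∈ Ioo a b, g (h x) = x) :
    ∀ x ∈ Ioo a b, ∀ l : ℕ, 1 ≤ l → l ≤ k →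
      iteratedDeriv l g (h x) =
        ∑ m ∈ Finset.range l,
          ((-1 : ℝ) ^ m / (Nat.factorial m)) * (deriv h x) ^ (-(l : ℤ) - m) *
            ∑ bb ∈ (Fintype.piFinset fun _ : Fin m => Finset.range (l + 2 * m + 1)).filter
                (fun bb : Fin m → ℕ => (∑ i, bb i) = l - 1 + m ∧ ∀ i, 2 ≤ bb i),
              ((Nat.factorial (l - 1 + m) : ℝ) / ∏ i, (Nat.factorial (bb i) : ℝ)) *
                ∏ i, iteratedDeriv (bb i) h x := by
  intro x hx l hl hlk
  obtain ⟨n, rfl⟩ := Nat.exists_eq_add_of_le' hl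
  rw [iteratedDeriv_succ_eq_invDerivFormula isOpen_Ioo hsm hd hg hlk hx, invDerivFormula]
  refine Finset.sum_congr rfl fun m _ => ?_
  have hexp : -((n + 1 : ℕ) : ℤ) - m = -((n + 1 + m : ℕ) : ℤ) := by push_cast; ring
  simp only [Nat.add_sub_cancel,
    filter_piFinset_range_eq_twoLeTuples (show n + m < n + 1 + 2 * m + 1 by omega), hexp,
    zpow_neg, zpow_natCast, iteratedDeriv_one, bellSum]
  ring

/-- Higher-order derivative formula for the inverse function: if `h` is `C^k` on `(a,b)`
with nonvanishing derivative and inverse `g`, then for `1 ≤ l ≤ k`,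
`g^{(l)}(h x) = Σ_{m=0}^{l-1} ((-1)^m/m!) (h'(x))^{-(l+m)}
  Σ_{b : b₁+⋯+b_m = l-1+m, b_i ≥ 2} ((l-1+m)!/(b₁!⋯b_m!)) h^{(b₁)}(x)⋯h^{(b_m)}(x)`. -/
theorem inverse_function_higher_deriv
    (a b : ℝ) (k : ℕ) (h g : ℝ → ℝ)
    (hsm : ContDiffOn ℝ k h (Ioo a b))
    (hd : ∀ x ∈ Ioo a b, deriv h x ≠ 0)
    (hg : ∀ x ∈ Ioo a b, g (h x) = x)
    (hg' : ∀ y ∈ h '' Ioo a b, g y ∈ Ioo a b ∧ h (g y) = y) :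
    ∀ x ∈ Ioo a b, ∀ l : ℕ, 1 ≤ l → l ≤ k →
      iteratedDeriv l g (h x) =
        ∑ m ∈ Finset.range l,
          ((-1 : ℝ) ^ m / (Nat.factorial m)) * (deriv h x) ^ (-(l : ℤ) - m) *
            ∑ bb ∈ (Fintype.piFinset fun _ : Fin m => Finset.range (l + 2 * m + 1)).filter
                (fun bb : Fin m → ℕ => (∑ i, bb i) = l - 1 + m ∧ ∀ i, 2 ≤ bb i),
              ((Nat.factorial (l - 1 + m) : ℝ) / ∏ i, (Nat.factorial (bb i) : ℝ)) *
                ∏ i, iteratedDeriv (bb i) h x :=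
  inverse_function_higher_deriv_general a b k h g hsm hd hg
end

section
/- Let (Ω,d) be a compact metric space, J ⊂ ℝ an open interval, and π_λ : Ω → ℝ a family of projections satisfying transversality and regularity of order τ ∈ [0,1) on a compact subinterval I ⊂ J, i.e., with Φ_λ(x,y) = (π_λ(x) − π_λ(y))/d(x,y) for x ≠ y: (transversality) |Φ_λ(x,y)| ≤ δ d(x,y)^τ implies |∂_λ Φ_λ(x,y)| ≥ δ d(x,y)^τ, and (regularity) |∂_λ Φ_λ(x,y)| ≤ C₁ d(x,y)^{-τ}, |Φ_λ(x,y)| ≤ C₀ d(x,y)^{-τ}, for all λ ∈ I. Then the map Ψ_λ(x) = (∂_λ π_λ(x), π_λ(x)) : Ω → ℝ² satisfies the bi-Hölder estimate c₁ d(x,y)^{1+τ} ≤ |Ψ_λ(x) − Ψ_λ(y)| ≤ c₂ d(x,y)^{1−τ} for all λ ∈ I and x,y ∈ Ω, with constants c₁, c₂ > 0 depending only on I, τ, δ, C₀, C₁ and diam(Ω). -/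
open Set Metric

/-- Bi-Hölder continuity of the map `Ψ_λ(x) = (∂_λπ_λ(x), π_λ(x))` under the Peres–Schlag
transversality and regularity conditions of order `τ` on a compact subinterval `I = [a,b]`. -/
theorem psi_biHolder
    {Ω : Type*} [MetricSpace Ω] [CompactSpace Ω]
    (π Dπ : ℝ → Ω → ℝ) (c d a b : ℝ)
    (hab : a ≤ b) (hI : Icc a b ⊆ Ioo c d)
    (τ : ℝ) (hτ0 : 0 ≤ τ) (hτ1 : τ < 1)
    (δ C₀ C₁ : ℝ) (hδ : 0 < δ) (hC₀ : 0 < C₀) (hC₁ : 0 < C₁)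
    -- `Dπ` is the λ-derivative of `π`
    (hderiv : ∀ x : Ω, ∀ lam ∈ Ioo c d, HasDerivAt (fun l => π l x) (Dπ lam x) lam)
    -- transversality of order τ on I
    (htrans : ∀ lam ∈ Icc a b, ∀ x y : Ω, x ≠ y →
      |(π lam x - π lam y) / dist x y| ≤ δ * dist x y ^ τ →
        δ * dist x y ^ τ ≤ |(Dπ lam x - Dπ lam y) / dist x y|)
    -- regularity of order τ on I
    (hreg1 : ∀ lam ∈ Icc a b, ∀ x y : Ω, x ≠ y →
      |(Dπ lam x - Dπ lam y) / dist x y| ≤ C₁ * dist x y ^ (-τ))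
    (hreg0 : ∀ lam ∈ Icc a b, ∀ x y : Ω, x ≠ y →
      |(π lam x - π lam y) / dist x y| ≤ C₀ * dist x y ^ (-τ)) :
    ∃ c₁ c₂ : ℝ, 0 < c₁ ∧ 0 < c₂ ∧
      ∀ lam ∈ Icc a b, ∀ x y : Ω,
        c₁ * dist x y ^ (1 + τ) ≤
            Real.sqrt ((Dπ lam x - Dπ lam y) ^ 2 + (π lam x - π lam y) ^ 2) ∧
          Real.sqrt ((Dπ lam x - Dπ lam y) ^ 2 + (π lam x - π lam y) ^ 2) ≤
            c₂ * dist x y ^ (1 - τ) := by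
  refine ⟨δ, C₀ + C₁, hδ, by positivity, ?_⟩
  intro lam hlam x y
  rcases eq_or_ne x y with rfl | hxy
  · have h1 : (0:ℝ) ^ (1 + τ) = 0 := Real.zero_rpow (by linarith)
    have h2 : (0:ℝ) ^ (1 - τ) = 0 := Real.zero_rpow (by linarith)
    simp [h1, h2]
  · set r := dist x y with hrdef
    have hr : 0 < r := dist_pos.2 hxy
    set A := Dπ lam x - Dπ lam y with hA
    set B := π lam x - π lam y with hB
    have hAd : |A / r| = |A| / r := by rw [abs_div, abs_of_pos hr]
    have hBd : |B / r| = |B| / r := by rw [abs_div, abs_of_pos hr]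
    have hsqA : |A| ≤ Real.sqrt (A ^ 2 + B ^ 2) := by
      rw [← Real.sqrt_sq_eq_abs]
      exact Real.sqrt_le_sqrt (by nlinarith)
    have hsqB : |B| ≤ Real.sqrt (A ^ 2 + B ^ 2) := by
      rw [← Real.sqrt_sq_eq_abs]
      exact Real.sqrt_le_sqrt (by nlinarith)
    have hr1τ : r ^ (1 + τ) = r ^ τ * r := by
      rw [Real.rpow_add hr, Real.rpow_one, mul_comm]
    have hr1τ' : r ^ (1 - τ) = r ^ (-τ) * r := by
      rw [sub_eq_add_neg, Real.rpow_add hr, Real.rpow_one, mul_comm]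
    constructor
    · -- lower bound
      by_cases h : |B / r| ≤ δ * r ^ τ
      · have hD := htrans lam hlam x y hxy h
        rw [hAd, le_div_iff₀ hr] at hD
        calc δ * r ^ (1 + τ) = δ * r ^ τ * r := by rw [hr1τ]; ring
          _ ≤ |A| := hD
          _ ≤ _ := hsqA
      · push_neg at h
        rw [hBd, lt_div_iff₀ hr] at h
        calc δ * r ^ (1 + τ) = δ * r ^ τ * r := by rw [hr1τ]; ring
          _ ≤ |B| := h.le
          _ ≤ _ := hsqB
    · -- upper bound
      have h0 := hreg0 lam hlam x y hxy
      have h1 := hreg1 lam hlam x y hxy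
      rw [hBd, div_le_iff₀ hr] at h0
      rw [hAd, div_le_iff₀ hr] at h1
      have habs : Real.sqrt (A ^ 2 + B ^ 2) ≤ |A| + |B| := by
        rw [show A ^ 2 + B ^ 2 = |A| ^ 2 + |B| ^ 2 by simp [sq_abs]]
        have := Real.sqrt_le_sqrt (show |A| ^ 2 + |B| ^ 2 ≤ (|A| + |B|) ^ 2 by
          nlinarith [abs_nonneg A, abs_nonneg B])
        rwa [Real.sqrt_sq (by positivity)] at this
      calc Real.sqrt (A ^ 2 + B ^ 2) ≤ |A| + |B| := habs
        _ ≤ C₁ * r ^ (-τ) * r + C₀ * r ^ (-τ) * r := add_le_add h1 h0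
        _ = (C₀ + C₁) * r ^ (1 - τ) := by rw [hr1τ']; ring
end

section
/- Let μ be a compactly supported Radon measure on ℝ², and let χ_ε(x) = ε^{-2} χ_Q(x/ε) where Q = (−1/2,1/2)² is the open unit square centered at the origin. Write μ_ε = χ_ε * μ (so μ_ε is a function on ℝ²), and suppose that for some t ∈ ℝ the sliced measure μ_t with respect to the vertical projection ρ₂(x₁,x₂) = x₂ exists, i.e. the limit Λ(η) = lim_{δ→0} (2δ)^{-1} ∫_{ρ₂^{-1}(t−δ,t+δ)} η dμ exists for every continuous η. Then for every η ∈ C(ℝ²), ∫ η dμ_t = lim_{ε→0} ∫_ℝ η(s,t) μ_ε(s,t) ds. -/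
/-!
Write `δ = ε / 2` and `S_δ = ρ₂⁻¹(t - δ, t + δ)`. By Fubini, `∫ η(s,t) μ_ε(s,t) ds` equals
`(2δ)⁻² ∫_{S_δ} (∫_{x₁-δ}^{x₁+δ} η(s,t) ds) dμ(x)`. For `x ∈ S_δ` every point `(s,t)` of the inner
integral lies within `δ` of `x`, so by uniform continuity of `η` near the support of `μ` the inner
integral is `2δ η(x) + o(δ)`. Hence the mollified integral differs from the strip average
`(2δ)⁻¹ ∫_{S_δ} η dμ` by `o(1)` times the normalized strip mass `(2δ)⁻¹ μ(S_δ)`. The mass is bounded,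
since by the slice hypothesis for `η = 1` it converges, and the strip average converges to
`∫ η dμ_t` by the same hypothesis.
-/

open Set MeasureTheory Filter Topology Asymptotics

theorem Continuous.integrable_of_ae_mem_isCompact {X E : Type*} [TopologicalSpace X]
    [T2Space X] [MeasurableSpace X] [OpensMeasurableSpace X] [NormedAddCommGroup E]
    {μ : Measure X} [IsFiniteMeasureOnCompacts μ] {K : Set X} (hK : IsCompact K)
    (hμK : ∀ᵐ x ∂μ, x ∈ K) {f : X → E} (hf : Continuous f) : Integrable f μ := by
  rw [← Measure.restrict_eq_self_of_ae_mem hμK]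
  exact hf.continuousOn.integrableOn_compact hK

theorem IsCompact.exists_forall_dist_lt {X Y : Type*} [PseudoMetricSpace X] [PseudoMetricSpace Y]
    {K : Set X} (hK : IsCompact K) {f : X → Y} (hf : Continuous f) {θ : ℝ} (hθ : 0 < θ) :
    ∃ r > 0, ∀ x ∈ K, ∀ y, dist x y < r → dist (f x) (f y) < θ := by
  obtain ⟨r, hr, hball⟩ := Metric.mem_uniformity_dist.1 <|
    hK.uniformContinuousAt_of_continuousAt f (fun x _ => hf.continuousAt)
      (Metric.dist_mem_uniformity hθ)
  exact ⟨r, hr, fun x hx y hxy => hball hxy hx⟩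

theorem norm_setIntegral_sub_smul_le {X E : Type*} [MeasurableSpace X] [NormedAddCommGroup E]
    [NormedSpace ℝ E] [CompleteSpace E] {μ : Measure X} {s : Set X} (hs : μ s < ⊤) {f : X → E}
    (hf : IntegrableOn f s μ) {v : E} {θ : ℝ} (h : ∀ x ∈ s, ‖f x - v‖ ≤ θ) :
    ‖∫ x in s, f x ∂μ - μ.real s • v‖ ≤ θ * μ.real s := by
  rw [← setIntegral_const, ← integral_sub hf (integrableOn_const hs.ne)]
  exact norm_setIntegral_le_of_norm_le_const hs h

theorem MeasureTheory.LocallyIntegrable.continuous_setIntegral_Ioo_sub_add {E : Type*}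
    [NormedAddCommGroup E] [NormedSpace ℝ E] {f : ℝ → E} (hf : LocallyIntegrable f) (c : ℝ) :
    Continuous fun y : ℝ => ∫ s in Ioo (y - c) (y + c), f s := by
  rcases lt_or_ge c 0 with hc | hc
  · have hempty : ∀ y : ℝ, Ioo (y - c) (y + c) = ∅ := fun y => Ioo_eq_empty (by linarith)
    simp only [hempty, Measure.restrict_empty, integral_zero_measure]
    exact continuous_const
  have hI : ∀ a b : ℝ, IntervalIntegrable f volume a b := fun a b =>
    (hf.integrableOn_isCompact isCompact_uIcc).intervalIntegrable
  have hsplit : ∀ y : ℝ, ∫ s in Ioo (y - c) (y + c), f s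
      = (∫ s in (0 : ℝ)..(y + c), f s) - ∫ s in (0 : ℝ)..(y - c), f s := fun y => by
    rw [intervalIntegral.integral_interval_sub_left (hI _ _) (hI _ _),
      intervalIntegral.integral_of_le (by linarith), integral_Ioc_eq_integral_Ioo]
  simp only [hsplit]
  have hprim := intervalIntegral.continuous_primitive hI 0
  fun_prop

theorem tendsto_div_const_nhdsGT_zero {c : ℝ} (hc : 0 < c) :
    Tendsto (fun ε : ℝ => ε / c) (𝓝[>] 0) (𝓝[>] 0) :=
  tendsto_nhdsWithin_iff.2
    ⟨((continuous_id.div_const c).tendsto' 0 0 (zero_div c)).mono_left nhdsWithin_le_nhds,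
      eventually_mem_nhdsWithin.mono fun _ hε => div_pos hε hc⟩

theorem mem_Ioo_sub_add_comm {s y c : ℝ} :
    s ∈ Ioo (y - c) (y + c) ↔ y ∈ Ioo (s - c) (s + c) := by
  simp only [← Real.ball_eq_Ioo, Metric.mem_ball_comm]

theorem integral_mul_measureReal_Ioo_eq_integral_setIntegral_Ioo (ρ : Measure ℝ)
    [IsFiniteMeasure ρ] {L : Set ℝ} (hL : IsCompact L) (hρL : ∀ᵐ y ∂ρ, y ∈ L) {f : ℝ → ℝ}
    (hf : LocallyIntegrable f) (c : ℝ) :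
    ∫ s, f s * ρ.real (Ioo (s - c) (s + c)) = ∫ y, (∫ s in Ioo (y - c) (y + c), f s) ∂ρ := by
  set D : Set (ℝ × ℝ) := {p | p.1 ∈ Ioo (p.2 - c) (p.2 + c)}
  have hD : MeasurableSet D :=
    (measurableSet_lt (f := fun p : ℝ × ℝ => p.2 - c) (by fun_prop) measurable_fst).inter
      (measurableSet_lt (g := fun p : ℝ × ℝ => p.2 + c) measurable_fst (by fun_prop))
  set F : ℝ × ℝ → ℝ := D.indicator fun p => f p.1
  have hFint : Integrable F (volume.prod ρ) := by
    set T := Metric.cthickening c L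
    have hTf : Integrable (T.indicator f) :=
      (hf.integrableOn_isCompact hL.cthickening).integrable_indicator
        hL.cthickening.isClosed.measurableSet
    refine (hTf.comp_fst ρ).norm.mono' (hf.aestronglyMeasurable.comp_fst.indicator hD) ?_
    filter_upwards [Measure.quasiMeasurePreserving_snd.ae hρL] with p hp
    by_cases hpD : p ∈ D
    · have hpT : p.1 ∈ T := Metric.mem_cthickening_of_dist_le _ _ _ _ hp <| by
        rw [Real.dist_eq, abs_le]; constructor <;> linarith [hpD.1, hpD.2]
      simp [F, hpD, hpT]
    · simp [F, hpD]
  have hsec_left : ∀ s, ∫ y, F (s, y) ∂ρ = f s * ρ.real (Ioo (s - c) (s + c)) := fun s => by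
    have : (fun y => F (s, y)) = (Ioo (s - c) (s + c)).indicator fun _ => f s := by
      ext y; simp only [F, D, indicator_apply, mem_ofPred_eq, mem_Ioo_sub_add_comm (s := s)]
    rw [this, integral_indicator_const _ measurableSet_Ioo, smul_eq_mul, mul_comm]
  have hsec_right : ∀ y, ∫ s, F (s, y) = ∫ s in Ioo (y - c) (y + c), f s := fun y =>
    show ∫ s, (Ioo (y - c) (y + c)).indicator f s = _ from integral_indicator measurableSet_Ioo
  simpa only [hsec_left, hsec_right] using integral_integral_swap (f := fun s y => F (s, y)) hFint

theorem integral_mul_measureReal_Ioo_prod_Ioo_eq_setIntegral (μ : Measure (ℝ × ℝ)) [IsFiniteMeasure μ]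
    {K : Set (ℝ × ℝ)} (hK : IsCompact K) (hμK : ∀ᵐ x ∂μ, x ∈ K) {f : ℝ → ℝ}
    (hf : LocallyIntegrable f) (t c : ℝ) :
    ∫ s, f s * μ.real (Ioo (s - c) (s + c) ×ˢ Ioo (t - c) (t + c))
      = ∫ x in Prod.snd ⁻¹' Ioo (t - c) (t + c), (∫ s in Ioo (x.1 - c) (x.1 + c), f s) ∂μ := by
  set S := Prod.snd ⁻¹' Ioo (t - c) (t + c)
  set ρ := (μ.restrict S).map Prod.fst
  have hρ : ∀ s, ρ.real (Ioo (s - c) (s + c)) = μ.real (Ioo (s - c) (s + c) ×ˢ Ioo (t - c) (t + c)) :=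
    fun s => by
      rw [measureReal_def, measureReal_def, Measure.map_apply measurable_fst measurableSet_Ioo,
        Measure.restrict_apply (measurable_fst measurableSet_Ioo), Set.prod_eq]
  have hL : IsCompact (Prod.fst '' K) := hK.image continuous_fst
  have hρL : ∀ᵐ y ∂ρ, y ∈ Prod.fst '' K :=
    (ae_map_iff measurable_fst.aemeasurable hL.isClosed.measurableSet).2 <|
      (ae_restrict_of_ae hμK).mono fun x hx => mem_image_of_mem _ hx
  simp only [← hρ]
  rw [integral_mul_measureReal_Ioo_eq_integral_setIntegral_Ioo ρ hL hρL hf,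
    integral_map measurable_fst.aemeasurable
      (hf.continuous_setIntegral_Ioo_sub_add c).aestronglyMeasurable]

theorem norm_setIntegral_Ioo_sub_two_mul_le {η : ℝ × ℝ → ℝ} (hη : Continuous η)
    {x : ℝ × ℝ} {t δ θ : ℝ} (hxt : x.2 ∈ Ioo (t - δ) (t + δ))
    (hθ : ∀ y, dist x y < δ → ‖η y - η x‖ ≤ θ) :
    ‖(∫ s in Ioo (x.1 - δ) (x.1 + δ), η (s, t)) - 2 * δ * η x‖ ≤ θ * (2 * δ) := by
  have hvol : volume.real (Ioo (x.1 - δ) (x.1 + δ)) = 2 * δ := by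
    rw [Real.volume_real_Ioo_of_le (by linarith [hxt.1, hxt.2])]; ring
  have hclose : ∀ s ∈ Ioo (x.1 - δ) (x.1 + δ), ‖η (s, t) - η x‖ ≤ θ := fun s hs => by
    refine hθ (s, t) ?_
    simp only [Prod.dist_eq, Real.dist_eq, max_lt_iff, abs_lt]
    simp only [mem_Ioo] at hs hxt
    exact ⟨⟨by linarith, by linarith⟩, ⟨by linarith, by linarith⟩⟩
  have hηt : Continuous fun s => η (s, t) := by fun_prop
  have := norm_setIntegral_sub_smul_le (measure_Ioo_lt_top (μ := volume))
    (hηt.integrableOn_Icc.mono_set Ioo_subset_Icc_self) hclose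
  rwa [hvol, smul_eq_mul] at this

theorem isLittleO_boxAverage_sub_stripAverage (μ : Measure (ℝ × ℝ)) [IsFiniteMeasure μ]
    {K : Set (ℝ × ℝ)} (hK : IsCompact K) (hμK : ∀ᵐ x ∂μ, x ∈ K) {η : ℝ × ℝ → ℝ}
    (hη : Continuous η) (t : ℝ) :
    (fun δ : ℝ => ((2 * δ) ^ 2)⁻¹ * ∫ x in Prod.snd ⁻¹' Ioo (t - δ) (t + δ),
          (∫ s in Ioo (x.1 - δ) (x.1 + δ), η (s, t)) ∂μ
        - (2 * δ)⁻¹ * ∫ x in Prod.snd ⁻¹' Ioo (t - δ) (t + δ), η x ∂μ)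
      =o[𝓝[>] 0] fun δ => (2 * δ)⁻¹ * μ.real (Prod.snd ⁻¹' Ioo (t - δ) (t + δ)) := by
  refine IsLittleO.of_bound fun θ hθ => ?_
  obtain ⟨r, hr, hη_near⟩ := hK.exists_forall_dist_lt hη hθ
  filter_upwards [Ioo_mem_nhdsGT hr] with δ ⟨hδ, hδr⟩
  set S := Prod.snd ⁻¹' Ioo (t - δ) (t + δ)
  set W : ℝ × ℝ → ℝ := fun x => ∫ s in Ioo (x.1 - δ) (x.1 + δ), η (s, t)
  have hηt : Continuous fun s => η (s, t) := by fun_prop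
  have hμS : ∀ᵐ x ∂μ.restrict S, x ∈ K := ae_restrict_of_ae hμK
  have hW : Integrable W (μ.restrict S) :=
    ((hηt.locallyIntegrable.continuous_setIntegral_Ioo_sub_add δ).comp continuous_fst)
      |>.integrable_of_ae_mem_isCompact hK hμS
  have hηS : Integrable η (μ.restrict S) := hη.integrable_of_ae_mem_isCompact hK hμS
  have hpoint : ∀ᵐ x ∂μ.restrict S, ‖W x - 2 * δ * η x‖ ≤ θ * (2 * δ) := by
    filter_upwards [hμS, ae_restrict_mem (measurable_snd measurableSet_Ioo)] with x hxK hxS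
    refine norm_setIntegral_Ioo_sub_two_mul_le hη hxS fun y hy => ?_
    rw [← dist_eq_norm, dist_comm]
    exact (hη_near x hxK y (hy.trans hδr)).le
  have hbound := norm_setIntegral_le_of_norm_le_const_ae (measure_lt_top μ S) hpoint
  rw [integral_sub hW (hηS.const_mul _), integral_const_mul] at hbound
  have hdiff : ((2 * δ) ^ 2)⁻¹ * ∫ x in S, W x ∂μ - (2 * δ)⁻¹ * ∫ x in S, η x ∂μ
      = ((2 * δ) ^ 2)⁻¹ * (∫ x in S, W x ∂μ - 2 * δ * ∫ x in S, η x ∂μ) := by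
    field_simp
  rw [hdiff, norm_mul, Real.norm_of_nonneg (by positivity : 0 ≤ ((2 * δ) ^ 2)⁻¹),
    Real.norm_of_nonneg (by positivity : 0 ≤ (2 * δ)⁻¹ * μ.real S)]
  calc ((2 * δ) ^ 2)⁻¹ * ‖∫ x in S, W x ∂μ - 2 * δ * ∫ x in S, η x ∂μ‖
      ≤ ((2 * δ) ^ 2)⁻¹ * (θ * (2 * δ) * μ.real S) := by gcongr
    _ = θ * ((2 * δ)⁻¹ * μ.real S) := by field_simp

theorem sliced_measure_mollifier_convergence_general
    (μ : Measure (ℝ × ℝ)) [IsFiniteMeasure μ]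
    (hcpt : ∃ K : Set (ℝ × ℝ), IsCompact K ∧ μ Kᶜ = 0)
    (t : ℝ) (ν : Measure (ℝ × ℝ))
    -- `ν = μ_t` is the sliced measure at `t`:
    (hslice : ∀ η : ℝ × ℝ → ℝ, Continuous η →
      Tendsto (fun δ : ℝ =>
          (2 * δ)⁻¹ * ∫ x in {p : ℝ × ℝ | p.2 ∈ Ioo (t - δ) (t + δ)}, η x ∂μ)
        (nhdsWithin 0 (Ioi 0)) (nhds (∫ x, η x ∂ν))) :
    ∀ η : ℝ × ℝ → ℝ, Continuous η →
      Tendsto (fun ε : ℝ =>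
          ∫ s : ℝ, η (s, t) *
            (ε ^ (2 : ℕ))⁻¹ *
              (μ (Ioo (s - ε / 2) (s + ε / 2) ×ˢ Ioo (t - ε / 2) (t + ε / 2))).toReal)
        (nhdsWithin 0 (Ioi 0)) (nhds (∫ x, η x ∂ν)) := by
  intro η hη
  obtain ⟨K, hK, hμK⟩ := hcpt
  have hKae : ∀ᵐ x ∂μ, x ∈ K := mem_ae_iff.2 hμK
  have hmass : Tendsto (fun δ : ℝ => (2 * δ)⁻¹ * μ.real (Prod.snd ⁻¹' Ioo (t - δ) (t + δ)))
      (𝓝[>] 0) (𝓝 (ν.real univ)) := by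
    have hone := hslice (fun _ => 1) continuous_const
    simp only [integral_const, measureReal_restrict_apply_univ, smul_eq_mul, mul_one] at hone
    exact hone
  have herr := (isLittleO_boxAverage_sub_stripAverage μ hK hKae hη t).trans_isBigO
    (hmass.isBigO_one ℝ)
  have hwindow := (hslice η hη).add ((isLittleO_one_iff ℝ).1 herr)
  rw [add_zero] at hwindow
  replace hwindow := hwindow.congr fun δ => add_sub_cancel _ _
  refine (hwindow.comp (tendsto_div_const_nhdsGT_zero two_pos)).congr fun ε => ?_
  have hηt : LocallyIntegrable fun s => η (s, t) := (by fun_prop : Continuous _).locallyIntegrable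
  simp only [Function.comp_apply, mul_div_cancel₀ ε two_ne_zero,
    ← integral_mul_measureReal_Ioo_prod_Ioo_eq_setIntegral μ hK hKae hηt, ← integral_const_mul]
  congr 1 with s
  rw [measureReal_def]
  ring

/-- If `μ` is a compactly supported finite (Radon) measure on `ℝ²`, `μ_ε = χ_ε * μ` its
mollification by normalized indicators of squares, and the sliced measure `μ_t` (w.r.t. the
vertical projection `ρ₂(x₁,x₂) = x₂`) exists at `t`, then for every continuous `η`,
`∫ η dμ_t = lim_{ε→0} ∫ η(s,t) μ_ε(s,t) ds`. -/
theorem sliced_measure_mollifier_convergence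
    (μ : Measure (ℝ × ℝ)) [IsFiniteMeasure μ]
    (hcpt : ∃ K : Set (ℝ × ℝ), IsCompact K ∧ μ Kᶜ = 0)
    (t : ℝ) (ν : Measure (ℝ × ℝ)) [IsFiniteMeasure ν]
    -- `ν = μ_t` is the sliced measure at `t`:
    (hslice : ∀ η : ℝ × ℝ → ℝ, Continuous η →
      Tendsto (fun δ : ℝ =>
          (2 * δ)⁻¹ * ∫ x in {p : ℝ × ℝ | p.2 ∈ Ioo (t - δ) (t + δ)}, η x ∂μ)
        (nhdsWithin 0 (Ioi 0)) (nhds (∫ x, η x ∂ν))) :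
    ∀ η : ℝ × ℝ → ℝ, Continuous η →
      Tendsto (fun ε : ℝ =>
          ∫ s : ℝ, η (s, t) *
            (ε ^ (2 : ℕ))⁻¹ *
              (μ (Ioo (s - ε / 2) (s + ε / 2) ×ˢ Ioo (t - ε / 2) (t + ε / 2))).toReal)
        (nhdsWithin 0 (Ioi 0)) (nhds (∫ x, η x ∂ν)) :=
  sliced_measure_mollifier_convergence_general μ hcpt t ν hslice
end

section
/- Fix x ≠ y in a compact metric space Ω with r = d(x,y), and let I ⊂ J be a compact interval on which a family of projections π_λ satisfies transversality and regularity of order τ ∈ [0,1) with constants δ and C₁ (as in the Peres–Schlag conditions, with Φ_λ(x,y) = (π_λ(x)−π_λ(y))/r). Write the open set {λ ∈ int I : |Φ_λ(x,y)| < δ r^τ} as a disjoint union of maximal open intervals I₁, I₂, …. Then each I_j has length at most 2, and any I_j sharing no boundary point with I satisfies L¹(I_j) ≥ (2δ/C₁) r^{2τ}; consequently there are only finitely many intervals I_j. -/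
open Set MeasureTheory

/-! On a component `(c, d)` of the bad set, transversality gives `|Φ'| ≥ δ r^τ` while
`|Φ| ≤ δ r^τ` on `[c, d]`, so the mean value theorem bounds `d - c` by `2`. At an endpoint
inside `(a, b)` maximality forces `|Φ| = δ r^τ`; as `Φ'` does not vanish, `Φ` runs from
`±δ r^τ` to `∓δ r^τ`, and regularity gives `2 δ r^τ ≤ C₁ r^{-τ} (d - c)`. The components are
disjoint subintervals of `(a, b)`, so only finitely many have length at least
`(2δ/C₁) r^{2τ}`, and only the (at most two) components ending at `a` or `b` can be shorter. -/

/-- For open `U` and `c < d`, the components `I_j` of `U` are exactly these `Ioo c d`. -/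
def IsMaximalIoo (U : Set ℝ) (c d : ℝ) : Prop :=
  Ioo c d ⊆ U ∧ ∀ c' d' : ℝ, Ioo c' d' ⊆ U → Ioo c d ⊆ Ioo c' d' → c' = c ∧ d' = d

namespace IsMaximalIoo

variable {U : Set ℝ} {c d l u : ℝ}

theorem le_and_le_of_inter_nonempty (h : IsMaximalIoo U c d) (hsub : Ioo l u ⊆ U)
    (hne : (Ioo c d ∩ Ioo l u).Nonempty) : c ≤ l ∧ u ≤ d := by
  obtain ⟨z, ⟨hcz, hzd⟩, hlz, hzu⟩ := hne
  have hunion := Ioo_union_Ioo' (hlz.trans hzd) (hcz.trans hzu)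
  obtain ⟨hmin, hmax⟩ := h.2 (min c l) (max d u) (hunion ▸ union_subset h.1 hsub)
    (hunion ▸ subset_union_left)
  exact ⟨min_eq_left_iff.mp hmin, max_eq_left_iff.mp hmax⟩

theorem eq_of_inter_nonempty (h : IsMaximalIoo U c d) (h' : IsMaximalIoo U l u)
    (hne : (Ioo c d ∩ Ioo l u).Nonempty) : c = l ∧ d = u := by
  obtain ⟨hcl, hud⟩ := h.le_and_le_of_inter_nonempty h'.1 hne
  obtain ⟨hlc, hdu⟩ := h'.le_and_le_of_inter_nonempty h.1 (inter_comm (Ioo c d) _ ▸ hne)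
  exact ⟨le_antisymm hcl hlc, le_antisymm hdu hud⟩

theorem right_eq_of_left_eq (h : IsMaximalIoo U c d) (h' : IsMaximalIoo U c u) (hcd : c < d)
    (hcu : c < u) : d = u :=
  (h.eq_of_inter_nonempty h' (by simp [Ioo_inter_Ioo, hcd, hcu])).2

theorem left_eq_of_right_eq (h : IsMaximalIoo U c d) (h' : IsMaximalIoo U l d) (hcd : c < d)
    (hld : l < d) : c = l :=
  (h.eq_of_inter_nonempty h' (by simp [Ioo_inter_Ioo, hcd, hld])).1

theorem left_notMem (h : IsMaximalIoo U c d) (hU : IsOpen U) (hcd : c < d) : c ∉ U := by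
  intro hc
  obtain ⟨l, u, ⟨hlc, hcu⟩, hsub⟩ := mem_nhds_iff_exists_Ioo_subset.mp (hU.mem_nhds hc)
  have hne : (Ioo c d ∩ Ioo l u).Nonempty := by
    simp [Ioo_inter_Ioo, hcd, hcu, hlc.le]
  exact hlc.not_ge (h.le_and_le_of_inter_nonempty hsub hne).1

theorem right_notMem (h : IsMaximalIoo U c d) (hU : IsOpen U) (hcd : c < d) : d ∉ U := by
  intro hd
  obtain ⟨l, u, ⟨hld, hdu⟩, hsub⟩ := mem_nhds_iff_exists_Ioo_subset.mp (hU.mem_nhds hd)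
  have hne : (Ioo c d ∩ Ioo l u).Nonempty := by
    simp [Ioo_inter_Ioo, hcd, hld, hdu.le]
  exact hdu.not_ge (h.le_and_le_of_inter_nonempty hsub hne).2

end IsMaximalIoo

section Finiteness

variable {U : Set ℝ} {a b ε : ℝ}

theorem finite_setOf_isMaximalIoo_of_le_sub (hU : U ⊆ Ioo a b) (hε : 0 < ε) :
    {p : ℝ × ℝ | p.1 < p.2 ∧ IsMaximalIoo U p.1 p.2 ∧ ε ≤ p.2 - p.1}.Finite := by
  let S := {p : ℝ × ℝ | p.1 < p.2 ∧ IsMaximalIoo U p.1 p.2}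
  have hdisj : Pairwise (Function.onFun Disjoint fun p : S => Ioo p.1.1 p.1.2) := by
    intro p q hpq
    by_contra hne
    obtain ⟨h1, h2⟩ := p.2.2.eq_of_inter_nonempty q.2.2 (not_disjoint_iff_nonempty_inter.mp hne)
    exact hpq (Subtype.ext (Prod.ext h1 h2))
  have hfin := Measure.finite_const_le_meas_of_disjoint_iUnion volume (ENNReal.ofReal_pos.mpr hε)
    (fun _ => measurableSet_Ioo) hdisj
    (measure_mono (iUnion_subset fun p : S => p.2.2.1.trans hU) |>.trans_lt
      measure_Ioo_lt_top).ne
  refine (hfin.image Subtype.val).subset fun p ⟨hp, hmax, hlen⟩ => ⟨⟨p, hp, hmax⟩, ?_, rfl⟩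
  simpa [Real.volume_Ioo] using ENNReal.ofReal_le_ofReal hlen

theorem finite_setOf_isMaximalIoo (hU : U ⊆ Ioo a b) (hε : 0 < ε)
    (hlong : ∀ c d, c < d → IsMaximalIoo U c d → a < c → d < b → ε ≤ d - c) :
    {p : ℝ × ℝ | p.1 < p.2 ∧ IsMaximalIoo U p.1 p.2}.Finite := by
  let S := {p : ℝ × ℝ | p.1 < p.2 ∧ IsMaximalIoo U p.1 p.2}
  have hleft : {p ∈ S | p.1 = a}.Subsingleton := by
    rintro p ⟨⟨hp, hpmax⟩, hpa⟩ q ⟨⟨hq, hqmax⟩, hqa⟩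
    rw [← hqa] at hpa
    rw [hpa] at hp hpmax
    exact Prod.ext hpa (hpmax.right_eq_of_left_eq hqmax hp hq)
  have hright : {p ∈ S | p.2 = b}.Subsingleton := by
    rintro p ⟨⟨hp, hpmax⟩, hpb⟩ q ⟨⟨hq, hqmax⟩, hqb⟩
    rw [← hqb] at hpb
    rw [hpb] at hp hpmax
    exact Prod.ext (hpmax.left_eq_of_right_eq hqmax hp hq) hpb
  refine ((hleft.finite.union hright.finite).union
    (finite_setOf_isMaximalIoo_of_le_sub hU hε)).subset fun p ⟨hp, hmax⟩ => ?_
  obtain ⟨hap, hpb⟩ := (Ioo_subset_Ioo_iff hp).mp (hmax.1.trans hU)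
  rcases hap.eq_or_lt with hap | hap
  · exact .inl (.inl ⟨⟨hp, hmax⟩, hap.symm⟩)
  rcases hpb.eq_or_lt with hpb | hpb
  · exact .inl (.inr ⟨⟨hp, hmax⟩, hpb⟩)
  exact .inr ⟨hp, hmax, hlong p.1 p.2 hp hmax hap hpb⟩

end Finiteness

section MeanValue

variable {f f' : ℝ → ℝ} {c d K M : ℝ}

theorem exists_abs_sub_eq_abs_deriv_mul (hcd : c < d)
    (hf : ∀ x ∈ Icc c d, HasDerivAt f (f' x) x) :
    ∃ z ∈ Ioo c d, |f d - f c| = |f' z| * (d - c) := by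
  obtain ⟨z, hz, hslope⟩ := exists_hasDerivAt_eq_slope f f' hcd
    (fun x hx => (hf x hx).continuousAt.continuousWithinAt)
    (fun x hx => hf x (Ioo_subset_Icc_self hx))
  refine ⟨z, hz, ?_⟩
  rw [hslope, abs_div, abs_of_pos (sub_pos.mpr hcd), div_mul_cancel₀ _ (sub_pos.mpr hcd).ne']

theorem sub_le_two_of_le_abs_deriv (hcd : c < d) (hf : ∀ x ∈ Icc c d, HasDerivAt f (f' x) x)
    (hK : 0 < K) (hf' : ∀ x ∈ Ioo c d, K ≤ |f' x|) (hc : |f c| ≤ K) (hd : |f d| ≤ K) :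
    d - c ≤ 2 := by
  obtain ⟨z, hz, hmvt⟩ := exists_abs_sub_eq_abs_deriv_mul hcd hf
  refine le_of_mul_le_mul_left ?_ hK
  calc K * (d - c) ≤ |f' z| * (d - c) :=
        mul_le_mul_of_nonneg_right (hf' z hz) (sub_pos.mpr hcd).le
    _ = |f d - f c| := hmvt.symm
    _ ≤ |f d| + |f c| := abs_sub _ _
    _ ≤ K * 2 := by linarith

theorem two_mul_le_mul_sub_of_abs_eq (hcd : c < d) (hf : ∀ x ∈ Icc c d, HasDerivAt f (f' x) x)
    (hf'0 : ∀ x ∈ Ioo c d, f' x ≠ 0) (hf'M : ∀ x ∈ Ioo c d, |f' x| ≤ M)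
    (hc : |f c| = K) (hd : |f d| = K) : 2 * K ≤ M * (d - c) := by
  obtain ⟨z, hz, hmvt⟩ := exists_abs_sub_eq_abs_deriv_mul hcd hf
  have hne : f d ≠ f c := by
    intro heq
    rw [heq, sub_self, abs_zero] at hmvt
    exact (mul_pos (abs_pos.mpr (hf'0 z hz)) (sub_pos.mpr hcd)).ne hmvt
  have hneg : f d = -f c := (abs_eq_abs.mp (hd.trans hc.symm)).resolve_left hne
  calc 2 * K = |f d - f c| := by rw [hneg, ← neg_add', abs_neg, ← two_mul, abs_mul, hc]; norm_num
    _ = |f' z| * (d - c) := hmvt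
    _ ≤ M * (d - c) := mul_le_mul_of_nonneg_right (hf'M z hz) (sub_pos.mpr hcd).le

end MeanValue

def badSet (Φ : ℝ → ℝ) (a b K : ℝ) : Set ℝ := {x ∈ Ioo a b | |Φ x| < K}

section BadSet

variable {Φ Φ' : ℝ → ℝ} {a b c d K M : ℝ}

theorem isOpen_badSet (hΦ : ContinuousOn Φ (Ioo a b)) : IsOpen (badSet Φ a b K) :=
  (continuous_abs.comp_continuousOn hΦ).isOpen_inter_preimage isOpen_Ioo isOpen_Iio

namespace IsMaximalIoo

theorem le_and_le_of_badSet (h : IsMaximalIoo (badSet Φ a b K) c d) (hcd : c < d) :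
    a ≤ c ∧ d ≤ b :=
  (Ioo_subset_Ioo_iff hcd).mp (h.1.trans (sep_subset _ _))

theorem abs_le_of_badSet (hΦ : ContinuousOn Φ (Icc a b)) (h : IsMaximalIoo (badSet Φ a b K) c d)
    (hcd : c < d) {x : ℝ} (hx : x ∈ Icc c d) : |Φ x| ≤ K := by
  obtain ⟨hac, hdb⟩ := h.le_and_le_of_badSet hcd
  have hΦx : ContinuousWithinAt (fun y => |Φ y|) (Ioo c d) x :=
    (hΦ x (Icc_subset_Icc hac hdb hx)).abs.mono
      (Ioo_subset_Icc_self.trans (Icc_subset_Icc hac hdb))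
  exact hΦx.closure_le (by rwa [closure_Ioo hcd.ne]) continuousWithinAt_const
    fun y hy => (h.1 hy).2.le

theorem le_abs_left_of_badSet (hΦ : ContinuousOn Φ (Ioo a b))
    (h : IsMaximalIoo (badSet Φ a b K) c d) (hcd : c < d) (hac : a < c) : K ≤ |Φ c| :=
  not_lt.mp fun hc => h.left_notMem (isOpen_badSet hΦ) hcd
    ⟨⟨hac, hcd.trans_le (h.le_and_le_of_badSet hcd).2⟩, hc⟩

theorem le_abs_right_of_badSet (hΦ : ContinuousOn Φ (Ioo a b))
    (h : IsMaximalIoo (badSet Φ a b K) c d) (hcd : c < d) (hdb : d < b) : K ≤ |Φ d| :=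
  not_lt.mp fun hd => h.right_notMem (isOpen_badSet hΦ) hcd
    ⟨⟨(h.le_and_le_of_badSet hcd).1.trans_lt hcd, hdb⟩, hd⟩

theorem sub_le_two_of_badSet (hK : 0 < K) (hderiv : ∀ x ∈ Icc a b, HasDerivAt Φ (Φ' x) x)
    (htrans : ∀ x ∈ Icc a b, |Φ x| ≤ K → K ≤ |Φ' x|) (h : IsMaximalIoo (badSet Φ a b K) c d)
    (hcd : c < d) : d - c ≤ 2 := by
  obtain ⟨hac, hdb⟩ := h.le_and_le_of_badSet hcd
  have hsub : Icc c d ⊆ Icc a b := Icc_subset_Icc hac hdb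
  have hΦ : ContinuousOn Φ (Icc a b) := fun x hx => (hderiv x hx).continuousAt.continuousWithinAt
  exact sub_le_two_of_le_abs_deriv hcd (fun x hx => hderiv x (hsub hx)) hK
    (fun x hx => htrans x (hsub (Ioo_subset_Icc_self hx)) (h.1 hx).2.le)
    (h.abs_le_of_badSet hΦ hcd (left_mem_Icc.mpr hcd.le))
    (h.abs_le_of_badSet hΦ hcd (right_mem_Icc.mpr hcd.le))

theorem two_mul_le_mul_sub_of_badSet (hK : 0 < K) (hderiv : ∀ x ∈ Icc a b, HasDerivAt Φ (Φ' x) x)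
    (htrans : ∀ x ∈ Icc a b, |Φ x| ≤ K → K ≤ |Φ' x|) (hreg : ∀ x ∈ Icc a b, |Φ' x| ≤ M)
    (h : IsMaximalIoo (badSet Φ a b K) c d) (hcd : c < d) (hac : a < c) (hdb : d < b) :
    2 * K ≤ M * (d - c) := by
  have hsub : Icc c d ⊆ Icc a b := Icc_subset_Icc hac.le hdb.le
  have hΦ : ContinuousOn Φ (Icc a b) := fun x hx => (hderiv x hx).continuousAt.continuousWithinAt
  exact two_mul_le_mul_sub_of_abs_eq hcd (fun x hx => hderiv x (hsub hx))
    (fun x hx => abs_pos.mp (hK.trans_le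
      (htrans x (hsub (Ioo_subset_Icc_self hx)) (h.1 hx).2.le)))
    (fun x hx => hreg x (hsub (Ioo_subset_Icc_self hx)))
    ((h.abs_le_of_badSet hΦ hcd (left_mem_Icc.mpr hcd.le)).antisymm
      (h.le_abs_left_of_badSet (hΦ.mono Ioo_subset_Icc_self) hcd hac))
    ((h.abs_le_of_badSet hΦ hcd (right_mem_Icc.mpr hcd.le)).antisymm
      (h.le_abs_right_of_badSet (hΦ.mono Ioo_subset_Icc_self) hcd hdb))

end IsMaximalIoo

end BadSet

theorem bad_set_interval_decomposition_general
    (a b r τ δ C₁ : ℝ) (hr : 0 < r)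
    (hδ : 0 < δ) (hC₁ : 0 < C₁)
    (Φ Φ' : ℝ → ℝ)
    (hderiv : ∀ lam ∈ Icc a b, HasDerivAt Φ (Φ' lam) lam)
    (htrans : ∀ lam ∈ Icc a b, |Φ lam| ≤ δ * r ^ τ → δ * r ^ τ ≤ |Φ' lam|)
    (hreg : ∀ lam ∈ Icc a b, |Φ' lam| ≤ C₁ * r ^ (-τ)) :
    -- maximal open subintervals of the bad set
    (∀ c d : ℝ, c < d →
      Ioo c d ⊆ {lam ∈ Ioo a b | |Φ lam| < δ * r ^ τ} →
      (∀ c' d' : ℝ, Ioo c' d' ⊆ {lam ∈ Ioo a b | |Φ lam| < δ * r ^ τ} →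
        Ioo c d ⊆ Ioo c' d' → c' = c ∧ d' = d) →
      d - c ≤ 2 ∧ (a < c → d < b → (2 * δ / C₁) * r ^ (2 * τ) ≤ d - c)) ∧
    Set.Finite {p : ℝ × ℝ | p.1 < p.2 ∧
      Ioo p.1 p.2 ⊆ {lam ∈ Ioo a b | |Φ lam| < δ * r ^ τ} ∧
      (∀ c' d' : ℝ, Ioo c' d' ⊆ {lam ∈ Ioo a b | |Φ lam| < δ * r ^ τ} →
        Ioo p.1 p.2 ⊆ Ioo c' d' → c' = p.1 ∧ d' = p.2)} := by
  have hK : 0 < δ * r ^ τ := by positivity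
  have hM : 0 < C₁ * r ^ (-τ) := by positivity
  have hε : 0 < 2 * δ / C₁ * r ^ (2 * τ) := by positivity
  have hεM : 2 * δ / C₁ * r ^ (2 * τ) * (C₁ * r ^ (-τ)) = 2 * (δ * r ^ τ) := by
    rw [two_mul τ, Real.rpow_add hr, Real.rpow_neg hr.le]
    field_simp
  have hbounds : ∀ c d, c < d → IsMaximalIoo (badSet Φ a b (δ * r ^ τ)) c d →
      d - c ≤ 2 ∧ (a < c → d < b → 2 * δ / C₁ * r ^ (2 * τ) ≤ d - c) := fun c d hcd h =>
    ⟨h.sub_le_two_of_badSet hK hderiv htrans hcd, fun hac hdb =>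
      le_of_mul_le_mul_right (by
        rw [hεM, mul_comm (d - c)]
        exact h.two_mul_le_mul_sub_of_badSet hK hderiv htrans hreg hcd hac hdb) hM⟩
  exact ⟨fun c d hcd hsub hmax => hbounds c d hcd ⟨hsub, hmax⟩,
    finite_setOf_isMaximalIoo (sep_subset _ _) hε fun c d hcd h => (hbounds c d hcd h).2⟩

/-- Structure of the "bad" set `{λ ∈ int I : |Φ_λ| < δ r^τ}` under transversality and
regularity: each maximal open subinterval `(c,d)` has length at most `2`; if it shares no
boundary point with `I = [a,b]` then its length is at least `(2δ/C₁) r^{2τ}`; and there are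
only finitely many maximal subintervals. -/
theorem bad_set_interval_decomposition
    (a b r τ δ C₁ : ℝ) (hab : a ≤ b) (hr : 0 < r) (hτ0 : 0 ≤ τ) (hτ1 : τ < 1)
    (hδ : 0 < δ) (hC₁ : 0 < C₁)
    (Φ Φ' : ℝ → ℝ)
    (hderiv : ∀ lam ∈ Icc a b, HasDerivAt Φ (Φ' lam) lam)
    (hcont : ContinuousOn Φ' (Icc a b))
    (htrans : ∀ lam ∈ Icc a b, |Φ lam| ≤ δ * r ^ τ → δ * r ^ τ ≤ |Φ' lam|)
    (hreg : ∀ lam ∈ Icc a b, |Φ' lam| ≤ C₁ * r ^ (-τ)) :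
    -- maximal open subintervals of the bad set
    (∀ c d : ℝ, c < d →
      Ioo c d ⊆ {lam ∈ Ioo a b | |Φ lam| < δ * r ^ τ} →
      (∀ c' d' : ℝ, Ioo c' d' ⊆ {lam ∈ Ioo a b | |Φ lam| < δ * r ^ τ} →
        Ioo c d ⊆ Ioo c' d' → c' = c ∧ d' = d) →
      d - c ≤ 2 ∧ (a < c → d < b → (2 * δ / C₁) * r ^ (2 * τ) ≤ d - c)) ∧
    Set.Finite {p : ℝ × ℝ | p.1 < p.2 ∧
      Ioo p.1 p.2 ⊆ {lam ∈ Ioo a b | |Φ lam| < δ * r ^ τ} ∧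
      (∀ c' d' : ℝ, Ioo c' d' ⊆ {lam ∈ Ioo a b | |Φ lam| < δ * r ^ τ} →
        Ioo p.1 p.2 ⊆ Ioo c' d' → c' = p.1 ∧ d' = p.2)} :=
  bad_set_interval_decomposition_general a b r τ δ C₁ hr hδ hC₁ Φ Φ' hderiv htrans hreg
end

section
/- Let F ⊂ [0,1]² be the self-affine set which is the attractor of the four affine maps sending the unit square to the four rectangles of width 1/4 and height 1/2 pictured in the iteration scheme (two rectangles in each of two columns, one column per half of the square, such that the horizontal projection of F is all of [0,1]). Then: (1) the natural uniformly distributed measure μ on F satisfies μ(Q) ≤ C·diam(Q)^{3/2} for all squares Q ⊂ ℝ², hence H^{3/2}(F) > 0; (2) the projection of F onto the x-axis is the interval [0,1]; (3) every vertical line meets F in at most two points, so every vertical slice of F has Hausdorff dimension 0. -/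
/-!
The `n`-th generation of the construction has one rectangle of size `4⁻ⁿ × 2⁻ⁿ` and mass `4⁻ⁿ` in
each column `[c / 4ⁿ, (c + 1) / 4ⁿ) × ℝ`, and inside it a strip of height `2⁻ⁿ⁻ᵏ` carries mass
`4⁻ⁿ 2⁻ᵏ`. A square of side `h ≤ 4⁻ⁿ` meets two columns and two strips of height `4⁻ⁿ`, so its
mass is at most `4 · 8⁻ⁿ ≲ h ^ (3/2)`, and the mass distribution principle gives `H^{3/2}(F) > 0`.

The first coordinates of the four maps are the base-`4` digit maps, hence the projection is
`[0, 1]`. Points of `F` on a vertical line that lie in the same first-generation rectangle come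
from points on a vertical line at twice the vertical distance. Two different rectangles meet a
vertical line only along their common edge, which is the image of the edge `x = 0` or `x = 1` of
`F`; each of these edges meets `F` in a single point, so no vertical line contains three points
of `F`.
-/

open Set MeasureTheory
open scoped ENNReal NNReal

/-- The four affine maps of the self-affine example: `f_i(x,y) = (x/4 + a_i, y/2 + b_i)`
with translations `(0,0), (1/4,1/2), (1/2,0), (3/4,1/2)`. -/
noncomputable def selfAffineMap (i : Fin 4) : ℝ × ℝ → ℝ × ℝ :=
  fun p => (p.1 / 4 + ![(0 : ℝ), 1/4, 1/2, 3/4] i, p.2 / 2 + ![(0 : ℝ), 1/2, 0, 1/2] i)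

lemma Finset.sum_le_of_support_subsingleton {ι M : Type*} [AddCommMonoid M] [PartialOrder M]
    [CanonicallyOrderedAdd M] (s : Finset ι) {f : ι → M} {B : M}
    (hf : (Function.support f).Subsingleton) (hB : ∀ i ∈ s, f i ≤ B) : ∑ i ∈ s, f i ≤ B := by
  by_cases hne : ∃ i ∈ s, f i ≠ 0
  · obtain ⟨i, hi, hfi⟩ := hne
    rw [Finset.sum_eq_single_of_mem i hi fun j _ hji => by_contra fun hfj => hji (hf hfj hfi)]
    exact hB i hi
  · push Not at hne
    rw [Finset.sum_eq_zero hne]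
    exact zero_le

lemma Int.eq_of_sub_mul_mem_Ico {p c i j : ℤ} (hi : c - i * p ∈ Ico 0 p)
    (hj : c - j * p ∈ Ico 0 p) : i = j := by
  obtain ⟨hi₀, hi₁⟩ := hi
  obtain ⟨hj₀, hj₁⟩ := hj
  rcases lt_trichotomy i j with h | h | h
  · nlinarith [mul_le_mul_of_nonneg_right (Int.add_one_le_of_lt h) (hi₀.trans_lt hi₁).le]
  · exact h
  · nlinarith [mul_le_mul_of_nonneg_right (Int.add_one_le_of_lt h) (hi₀.trans_lt hi₁).le]

lemma ENNReal.eq_zero_of_le_mul_self {a c : ℝ≥0∞} (ha : a ≠ ⊤) (hc : c < 1) (h : a ≤ c * a) :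
    a = 0 := by
  by_contra h0
  exact h.not_gt (by simpa using ENNReal.mul_lt_mul_left h0 ha hc)

lemma ENNReal.inv_four_mul_add_self (a : ℝ≥0∞) : 4⁻¹ * (a + a) = 2⁻¹ * a := by
  rw [← two_mul, show (4 : ℝ≥0∞) = 2 * 2 by norm_num, ENNReal.mul_inv (by simp) (by simp),
    mul_assoc, ← mul_assoc _ 2, ENNReal.inv_mul_cancel (by simp) (by simp), one_mul]

lemma inv_eight_pow_le_rpow (n : ℕ) {h : ℝ} (hn : 4⁻¹ ^ n ≤ h) : 8⁻¹ ^ n ≤ h ^ (3 / 2 : ℝ) := by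
  have h4 : (4 : ℝ)⁻¹ ^ n = (2⁻¹ ^ n) ^ (2 : ℝ) := by
    rw [Real.rpow_two, ← pow_mul, mul_comm, pow_mul]; norm_num
  have h8 : (8 : ℝ)⁻¹ ^ n = ((2⁻¹ ^ n) ^ (2 : ℝ)) ^ (3 / 2 : ℝ) := by
    rw [← Real.rpow_mul (by positivity), show (2 : ℝ) * (3 / 2) = (3 : ℕ) by norm_num,
      Real.rpow_natCast, ← pow_mul, mul_comm, pow_mul]; norm_num
  rw [h8, ← h4]
  exact Real.rpow_le_rpow (by positivity) hn (by norm_num)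

lemma eq_of_forall_abs_sub_le_inv_two_pow {a b : ℝ} (h : ∀ n : ℕ, |a - b| ≤ 2⁻¹ ^ n) : a = b := by
  refine eq_of_forall_dist_le fun ε hε => ?_
  obtain ⟨n, hn⟩ := exists_pow_lt_of_lt_one hε (by norm_num : (2 : ℝ)⁻¹ < 1)
  exact (Real.dist_eq a b ▸ h n).trans hn.le

lemma exists_subset_pair_of_pairwise_ne {α : Type*} [Nonempty α] {S : Set α}
    (h : ∀ a ∈ S, ∀ b ∈ S, ∀ c ∈ S, a ≠ b → a ≠ c → b ≠ c → False) : ∃ p q, S ⊆ {p, q} := by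
  rcases S.eq_empty_or_nonempty with rfl | ⟨p, hp⟩
  · exact ⟨Classical.arbitrary α, Classical.arbitrary α, empty_subset _⟩
  by_cases hq : ∃ q ∈ S, q ≠ p
  · obtain ⟨q, hq, hqp⟩ := hq
    refine ⟨p, q, fun r hr => ?_⟩
    by_contra hne
    simp only [mem_insert_iff, mem_singleton_iff, not_or] at hne
    exact h p hp q hq r hr hqp.symm (Ne.symm hne.1) (Ne.symm hne.2)
  · push Not at hq
    exact ⟨p, p, fun r hr => Or.inl (hq r hr)⟩

lemma hausdorffMeasure_pos_of_le_mul_ediam_rpow {X : Type*} [EMetricSpace X] [MeasurableSpace X]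
    [BorelSpace X] {μ : Measure X} {d : ℝ} {C : ℝ≥0∞} (hC : C ≠ ⊤)
    (hμ : ∀ s, μ s ≤ C * Metric.ediam s ^ d) {F : Set X} (hF : μ F ≠ 0) : 0 < μH[d] F := by
  have hC₀ : C ≠ 0 := fun h => hF (le_antisymm (by simpa [h] using hμ F) zero_le)
  have hle : C⁻¹ • μ ≤ μH[d] := Measure.le_hausdorffMeasure d _ 1 one_pos fun s _ => by
    rw [Measure.smul_apply, smul_eq_mul, ENNReal.inv_mul_le_iff hC₀ hC]
    exact hμ s
  exact (ENNReal.mul_pos (ENNReal.inv_ne_zero.2 hC) hF).trans_le (hle F)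

lemma eq_or_eq_or_eq_of_two_values {α : Type*} {x y a b c : α} (ha : a = x ∨ a = y)
    (hb : b = x ∨ b = y) (hc : c = x ∨ c = y) : a = b ∨ a = c ∨ b = c := by
  rcases ha with rfl | rfl <;> rcases hb with rfl | rfl <;> rcases hc with rfl | rfl <;> simp

noncomputable def digitMap (r j : ℕ) (x : ℝ) : ℝ := (x + j) / r

lemma digitMap_eq_digitMap_iff {r i j : ℕ} (hr : 0 < r) {x y : ℝ} :
    digitMap r i x = digitMap r j y ↔ x + i = y + j :=
  div_left_inj' (Nat.cast_pos.2 hr).ne'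

lemma digitMap_injective {r : ℕ} (hr : 0 < r) (j : ℕ) : Function.Injective (digitMap r j) :=
  fun _ _ h => add_right_cancel ((digitMap_eq_digitMap_iff hr).1 h)

lemma digitMap_left_injective {r : ℕ} (hr : 0 < r) (x : ℝ) :
    Function.Injective fun j : ℕ => digitMap r j x :=
  fun _ _ h => by exact_mod_cast add_left_cancel ((digitMap_eq_digitMap_iff hr).1 h)

lemma eq_zero_or_one_of_digitMap_eq {r i j : ℕ} (hr : 0 < r) (hij : i ≠ j) {x y : ℝ}
    (hx : x ∈ Icc (0 : ℝ) 1) (hy : y ∈ Icc (0 : ℝ) 1) (h : digitMap r i x = digitMap r j y) :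
    x = 0 ∨ x = 1 := by
  rw [digitMap_eq_digitMap_iff hr] at h
  rcases hij.lt_or_gt with hlt | hlt
  · have : (i : ℝ) + 1 ≤ j := by exact_mod_cast hlt
    right; linarith [hx.2, hy.1]
  · have : (j : ℝ) + 1 ≤ i := by exact_mod_cast hlt
    left; linarith [hx.1, hy.2]

lemma preimage_digitMap_Ici_one {r : ℕ} (hr : 0 < r) (j : ℕ) :
    digitMap r j ⁻¹' Ici 1 = Ici ((r : ℝ) - j) := by
  ext x
  simp only [digitMap, mem_preimage, mem_Ici, one_le_div (by positivity : (0 : ℝ) < r)]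
  constructor <;> intro h <;> linarith

lemma exists_digit {r : ℕ} (hr : 0 < r) {x : ℝ} (hx : x ∈ Icc (0 : ℝ) 1) :
    ∃ j < r, r * x - j ∈ Icc (0 : ℝ) 1 := by
  rcases hx.2.eq_or_lt with rfl | hx1
  · refine ⟨r - 1, Nat.sub_lt hr one_pos, ?_⟩
    rw [Nat.cast_pred hr]
    norm_num
  · have hrx : 0 ≤ r * x := mul_nonneg (Nat.cast_nonneg r) hx.1
    refine ⟨⌊r * x⌋₊, (Nat.floor_lt hrx).2 (by nlinarith [(Nat.cast_pos.2 hr : (0 : ℝ) < r)]),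
      sub_nonneg.2 (Nat.floor_le hrx), ?_⟩
    linarith [Nat.lt_floor_add_one (r * x)]

lemma Icc_subset_of_digitMap_mem {r : ℕ} (hr : 2 ≤ r) {P : Set ℝ} (hPc : IsClosed P)
    (hPne : P.Nonempty) (hP01 : P ⊆ Icc 0 1) (hP : ∀ j < r, ∀ p ∈ P, digitMap r j p ∈ P) :
    Icc 0 1 ⊆ P := by
  have hr₀ : (0 : ℝ) < r := by positivity
  have happrox : ∀ n : ℕ, ∀ x ∈ Icc (0 : ℝ) 1, ∃ p ∈ P, dist p x ≤ (r : ℝ)⁻¹ ^ n := by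
    intro n
    induction n with
    | zero =>
      intro x hx
      obtain ⟨p, hp⟩ := hPne
      refine ⟨p, hp, ?_⟩
      rw [pow_zero, Real.dist_eq, abs_le]
      constructor <;> linarith [(hP01 hp).1, (hP01 hp).2, hx.1, hx.2]
    | succ n ih =>
      intro x hx
      obtain ⟨j, hj, hjx⟩ := exists_digit (by omega : 0 < r) hx
      obtain ⟨p, hp, hpx⟩ := ih _ hjx
      refine ⟨digitMap r j p, hP j hj p hp, ?_⟩
      have : digitMap r j p - x = (p - (r * x - j)) / r := by
        unfold digitMap; field_simp; ring
      rw [Real.dist_eq, this, abs_div, abs_of_pos hr₀, div_le_iff₀ hr₀, pow_succ,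
        mul_assoc, inv_mul_cancel₀ hr₀.ne', mul_one]
      exact hpx
  intro x hx
  rw [← hPc.closure_eq, Metric.mem_closure_iff]
  intro ε hε
  obtain ⟨n, hn⟩ := exists_pow_lt_of_lt_one hε (inv_lt_one_of_one_lt₀ (Nat.one_lt_cast.2 hr))
  obtain ⟨p, hp, hpx⟩ := happrox n x hx
  exact ⟨p, hp, by rw [dist_comm]; linarith⟩

-- Half-open cells tile the line, so only the lines `x = 1` and `y = 1` have to be shown null.
noncomputable def adicIco (r n : ℕ) (c : ℤ) : Set ℝ := Ico (c / r ^ n) ((c + 1) / r ^ n)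

lemma measurableSet_adicIco (r n : ℕ) (c : ℤ) : MeasurableSet (adicIco r n c) :=
  measurableSet_Ico

lemma preimage_digitMap_adicIco_succ {r : ℕ} (hr : 0 < r) (n j : ℕ) (c : ℤ) :
    digitMap r j ⁻¹' adicIco r (n + 1) c = adicIco r n (c - j * r ^ n) := by
  have hrn : (0 : ℝ) < (r : ℝ) ^ n := by positivity
  have hr' : (0 : ℝ) < r := by exact_mod_cast hr
  ext x
  simp only [digitMap, adicIco, mem_preimage, mem_Ico, pow_succ]
  push_cast
  rw [div_le_div_iff₀ (by positivity) hr', div_lt_div_iff₀ hr' (by positivity),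
    div_le_iff₀ hrn, lt_div_iff₀ hrn]
  constructor <;> rintro ⟨h₁, h₂⟩ <;> constructor <;> nlinarith

lemma adicIco_subset_Iio {r n : ℕ} {c : ℤ} (hc : c < 0) : adicIco r n c ⊆ Iio 0 := by
  rintro x ⟨-, hx⟩
  have : (c : ℝ) + 1 ≤ 0 := by exact_mod_cast hc
  exact hx.trans_le (div_nonpos_of_nonpos_of_nonneg this (by positivity))

lemma adicIco_subset_Ici {r n : ℕ} {c : ℤ} (hr : 0 < r) (hc : (r : ℤ) ^ n ≤ c) :
    adicIco r n c ⊆ Ici 1 := by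
  rintro x ⟨hx, -⟩
  have : (r : ℝ) ^ n ≤ c := by exact_mod_cast hc
  exact ((one_le_div (by positivity)).2 this).trans hx

lemma exists_Icc_subset_adicIco_union {r : ℕ} (hr : 0 < r) (n : ℕ) (x : ℝ) {h : ℝ}
    (hh : h ≤ ((r : ℝ) ^ n)⁻¹) : ∃ c : ℤ, Icc x (x + h) ⊆ adicIco r n c ∪ adicIco r n (c + 1) := by
  have hrn : (0 : ℝ) < (r : ℝ) ^ n := by positivity
  refine ⟨⌊x * r ^ n⌋, fun y ⟨hxy, hyx⟩ => ?_⟩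
  have h₁ := Int.floor_le (x * r ^ n)
  have h₂ := Int.lt_floor_add_one (x * r ^ n)
  have hhr : h * r ^ n ≤ 1 := by
    simpa [hrn.ne'] using mul_le_mul_of_nonneg_right hh hrn.le
  simp only [adicIco, mem_union, mem_Ico, div_le_iff₀ hrn, lt_div_iff₀ hrn]
  push_cast
  rcases lt_or_ge (y * r ^ n) (⌊x * r ^ n⌋ + 1) with hy | hy
  · exact Or.inl ⟨by nlinarith, hy⟩
  · exact Or.inr ⟨hy, by nlinarith⟩

lemma selfAffineMap_eq (i : Fin 4) :
    selfAffineMap i = Prod.map (digitMap 4 i) (digitMap 2 (i % 2)) := by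
  ext p <;> fin_cases i <;> simp [selfAffineMap, digitMap] <;> ring

lemma selfAffineMap_fst (i : Fin 4) (z : ℝ × ℝ) : (selfAffineMap i z).1 = digitMap 4 i z.1 := by
  rw [selfAffineMap_eq]; rfl

lemma selfAffineMap_snd (i : Fin 4) (z : ℝ × ℝ) :
    (selfAffineMap i z).2 = digitMap 2 (i % 2) z.2 := by
  rw [selfAffineMap_eq]; rfl

lemma measurable_selfAffineMap (i : Fin 4) : Measurable (selfAffineMap i) := by
  rw [selfAffineMap_eq]; unfold digitMap; fun_prop

structure IsSelfAffineMeasure (μ : Measure (ℝ × ℝ)) : Prop where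
  measure_compl_unitSquare : μ (Icc 0 1 ×ˢ Icc 0 1)ᶜ = 0
  eq_smul_sum_map : μ = (4 : ℝ≥0∞)⁻¹ • ∑ i : Fin 4, Measure.map (selfAffineMap i) μ

namespace IsSelfAffineMeasure

variable {μ : Measure (ℝ × ℝ)}

lemma measure_prod_eq (hμ : IsSelfAffineMeasure μ) {s t : Set ℝ} (hs : MeasurableSet s)
    (ht : MeasurableSet t) :
    μ (s ×ˢ t) = 4⁻¹ * ∑ i : Fin 4, μ ((digitMap 4 i ⁻¹' s) ×ˢ (digitMap 2 (i % 2) ⁻¹' t)) := by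
  conv_lhs => rw [hμ.eq_smul_sum_map]
  rw [Measure.smul_apply, Measure.coe_finsetSum, Finset.sum_apply, smul_eq_mul]
  congr 1
  refine Finset.sum_congr rfl fun i _ => ?_
  rw [Measure.map_apply (measurable_selfAffineMap i) (hs.prod ht), selfAffineMap_eq,
    preimage_prod_map_prod]

lemma measure_eq_zero_of_disjoint (hμ : IsSelfAffineMeasure μ) {S : Set (ℝ × ℝ)}
    (h : Disjoint S (Icc 0 1 ×ˢ Icc 0 1)) : μ S = 0 :=
  measure_mono_null h.subset_compl_right hμ.measure_compl_unitSquare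

lemma measure_Ici_one_prod_univ (hμ : IsSelfAffineMeasure μ) [IsFiniteMeasure μ] :
    μ (Ici 1 ×ˢ univ) = 0 := by
  -- only `f₃` reaches `x ≥ 1`, so this measure equals a quarter of itself
  have hnull : ∀ a : ℝ, 1 < a → μ (Ici a ×ˢ univ) = 0 := fun a ha =>
    hμ.measure_eq_zero_of_disjoint <| disjoint_left.2 fun z hz hz' => by
      linarith [mem_Ici.1 hz.1, hz'.1.2]
  have h := hμ.measure_prod_eq (measurableSet_Ici (a := 1)) MeasurableSet.univ
  simp only [Fin.sum_univ_four, preimage_digitMap_Ici_one four_pos, preimage_univ] at h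
  norm_num [hnull] at h
  exact ENNReal.eq_zero_of_le_mul_self (measure_ne_top _ _) (by norm_num) h.le

lemma measure_univ_prod_Ici_one (hμ : IsSelfAffineMeasure μ) [IsFiniteMeasure μ] :
    μ (univ ×ˢ Ici 1) = 0 := by
  have hnull : μ (univ ×ˢ Ici 2) = 0 :=
    hμ.measure_eq_zero_of_disjoint <| disjoint_left.2 fun z hz hz' => by
      linarith [mem_Ici.1 hz.2, hz'.2.2]
  have h := hμ.measure_prod_eq MeasurableSet.univ (measurableSet_Ici (a := 1))
  simp only [Fin.sum_univ_four, preimage_digitMap_Ici_one two_pos, preimage_univ] at h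
  norm_num [hnull] at h
  rw [ENNReal.inv_four_mul_add_self] at h
  exact ENNReal.eq_zero_of_le_mul_self (measure_ne_top _ _) (by norm_num) h.le

lemma measure_adicIco_prod_eq_zero (hμ : IsSelfAffineMeasure μ) [IsFiniteMeasure μ] {n : ℕ}
    {c : ℤ} (hc : c ∉ Ico 0 (4 ^ n)) (t : Set ℝ) : μ (adicIco 4 n c ×ˢ t) = 0 := by
  rcases lt_or_ge c 0 with hc' | hc'
  · refine measure_mono_null (prod_mono (adicIco_subset_Iio hc') (subset_univ t))
      (hμ.measure_eq_zero_of_disjoint <| disjoint_left.2 fun z hz hz' => ?_)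
    exact (not_le.2 (mem_Iio.1 hz.1)) hz'.1.1
  · exact measure_mono_null (prod_mono (adicIco_subset_Ici four_pos (by simpa [hc'] using hc))
      (subset_univ t)) hμ.measure_Ici_one_prod_univ

lemma measure_univ_prod_adicIco_eq_zero (hμ : IsSelfAffineMeasure μ) [IsFiniteMeasure μ] {k : ℕ}
    {d : ℤ} (hd : d ∉ Ico 0 (2 ^ k)) : μ (univ ×ˢ adicIco 2 k d) = 0 := by
  rcases lt_or_ge d 0 with hd' | hd'
  · refine hμ.measure_eq_zero_of_disjoint <| disjoint_left.2 fun z hz hz' => ?_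
    exact (not_le.2 (mem_Iio.1 (adicIco_subset_Iio hd' hz.2))) hz'.2.1
  · exact measure_mono_null (prod_mono (subset_univ _)
      (adicIco_subset_Ici two_pos (by simpa [hd'] using hd))) hμ.measure_univ_prod_Ici_one

lemma measure_univ_prod_adicIco_le (hμ : IsSelfAffineMeasure μ) [IsProbabilityMeasure μ]
    (k : ℕ) (d : ℤ) : μ (univ ×ˢ adicIco 2 k d) ≤ 2⁻¹ ^ k := by
  induction k generalizing d with
  | zero => simpa using prob_le_one
  | succ k ih =>
    have h := hμ.measure_prod_eq MeasurableSet.univ (measurableSet_adicIco 2 (k + 1) d)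
    simp only [Fin.sum_univ_four, preimage_univ, preimage_digitMap_adicIco_succ two_pos] at h
    norm_num at h
    have hsum : μ (univ ×ˢ adicIco 2 k d) + μ (univ ×ˢ adicIco 2 k (d - 2 ^ k)) ≤ 2⁻¹ ^ k := by
      by_cases hd : d ∈ Ico 0 (2 ^ k)
      · have hd' : d - 2 ^ k ∉ Ico 0 (2 ^ k) := fun h' => by linarith [hd.2, h'.1]
        simpa [hμ.measure_univ_prod_adicIco_eq_zero hd'] using ih d
      · simpa [hμ.measure_univ_prod_adicIco_eq_zero hd] using ih _
    rw [h, add_assoc (_ + _), ENNReal.inv_four_mul_add_self, pow_succ']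
    gcongr

lemma measure_adicIco_prod_adicIco_le (hμ : IsSelfAffineMeasure μ) [IsProbabilityMeasure μ]
    (n k : ℕ) (c d : ℤ) : μ (adicIco 4 n c ×ˢ adicIco 2 (n + k) d) ≤ 4⁻¹ ^ n * 2⁻¹ ^ k := by
  induction n generalizing c d with
  | zero =>
    simpa using (measure_mono (prod_mono (subset_univ _) subset_rfl)).trans
      (hμ.measure_univ_prod_adicIco_le k d)
  | succ n ih =>
    rw [show n + 1 + k = n + k + 1 by ring,
      hμ.measure_prod_eq (measurableSet_adicIco _ _ _) (measurableSet_adicIco _ _ _),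
      pow_succ', mul_assoc]
    simp only [preimage_digitMap_adicIco_succ four_pos, preimage_digitMap_adicIco_succ two_pos]
    gcongr
    -- the preimages lie in the columns `c - i 4ⁿ`, at most one of which meets `[0, 1)`
    refine Finset.sum_le_of_support_subsingleton _ (fun i hi j hj => ?_) fun i _ => ih _ _
    have hcol : ∀ l : Fin 4, μ (adicIco 4 n (c - (l : ℕ) * (4 : ℕ) ^ n) ×ˢ
        adicIco 2 (n + k) (d - ((l : ℕ) % 2 : ℕ) * (2 : ℕ) ^ (n + k))) ≠ 0 →
        c - (l : ℕ) * 4 ^ n ∈ Ico 0 (4 ^ n) := fun l hl =>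
      by_contra fun h => hl (hμ.measure_adicIco_prod_eq_zero (by exact_mod_cast h) _)
    exact Fin.ext (by exact_mod_cast Int.eq_of_sub_mul_mem_Ico (hcol i hi) (hcol j hj))

lemma measure_square_le_of_le (hμ : IsSelfAffineMeasure μ) [IsProbabilityMeasure μ] (n : ℕ)
    (x y : ℝ) {h : ℝ} (hh : h ≤ 4⁻¹ ^ n) :
    μ (Icc x (x + h) ×ˢ Icc y (y + h)) ≤ 4 * 8⁻¹ ^ n := by
  obtain ⟨c, hc⟩ := exists_Icc_subset_adicIco_union four_pos n x (h := h) (by simpa using hh)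
  obtain ⟨d, hd⟩ := exists_Icc_subset_adicIco_union two_pos (n + n) y (h := h)
    (by convert hh using 1; rw [← two_mul, pow_mul, inv_pow]; norm_num)
  have hcell : ∀ c' d', μ (adicIco 4 n c' ×ˢ adicIco 2 (n + n) d') ≤ 8⁻¹ ^ n := fun c' d' =>
    (hμ.measure_adicIco_prod_adicIco_le n n c' d').trans_eq <| by
      rw [← mul_pow, ← ENNReal.mul_inv (by simp) (by simp)]; norm_num
  calc μ (Icc x (x + h) ×ˢ Icc y (y + h))
      ≤ μ ((adicIco 4 n c ×ˢ adicIco 2 (n + n) d ∪ adicIco 4 n c ×ˢ adicIco 2 (n + n) (d + 1)) ∪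
          (adicIco 4 n (c + 1) ×ˢ adicIco 2 (n + n) d ∪
            adicIco 4 n (c + 1) ×ˢ adicIco 2 (n + n) (d + 1))) := by
        rw [← prod_union, ← prod_union, ← union_prod]
        exact measure_mono (prod_mono hc hd)
    _ ≤ (8⁻¹ ^ n + 8⁻¹ ^ n) + (8⁻¹ ^ n + 8⁻¹ ^ n) :=
        (measure_union_le _ _).trans <| add_le_add
          ((measure_union_le _ _).trans (add_le_add (hcell _ _) (hcell _ _)))
          ((measure_union_le _ _).trans (add_le_add (hcell _ _) (hcell _ _)))
    _ = 4 * 8⁻¹ ^ n := by ring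

lemma measure_square_le (hμ : IsSelfAffineMeasure μ) [IsProbabilityMeasure μ] (x y h : ℝ) :
    μ (Icc x (x + h) ×ˢ Icc y (y + h)) ≤ ENNReal.ofReal (32 * h ^ (3 / 2 : ℝ)) := by
  rcases le_or_gt h 0 with h0 | h0
  · have hlim : Filter.Tendsto (fun n : ℕ => (4 : ℝ≥0∞) * 8⁻¹ ^ n) Filter.atTop (nhds 0) := by
      simpa using ENNReal.Tendsto.const_mul
        (ENNReal.tendsto_pow_atTop_nhds_zero_of_lt_one (by norm_num)) (Or.inr ENNReal.ofNat_ne_top)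
    exact (ge_of_tendsto' hlim fun n =>
      hμ.measure_square_le_of_le n x y (h0.trans (by positivity))).trans zero_le
  rcases le_or_gt h 1 with h1 | h1
  · obtain ⟨n, hn, hn'⟩ := exists_nat_pow_near ((one_le_inv₀ h0).2 h1) (by norm_num : (1 : ℝ) < 4)
    refine (hμ.measure_square_le_of_le n x y
      (by rw [inv_pow]; exact (le_inv_comm₀ (by positivity) h0).1 hn)).trans ?_
    have hpow := inv_eight_pow_le_rpow (n + 1) (h := h)
      (by rw [inv_pow]; exact (inv_le_comm₀ h0 (by positivity)).1 hn'.le)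
    rw [show (4 : ℝ≥0∞) * 8⁻¹ ^ n = ENNReal.ofReal (4 * 8⁻¹ ^ n) by
      rw [ENNReal.ofReal_mul (by norm_num), ENNReal.ofReal_pow (by norm_num),
        ENNReal.ofReal_inv_of_pos (by norm_num)]; simp]
    refine ENNReal.ofReal_le_ofReal ?_
    rw [pow_succ] at hpow
    linarith
  · refine prob_le_one.trans (ENNReal.one_le_ofReal.2 ?_)
    linarith [Real.one_le_rpow h1.le (by norm_num : (0 : ℝ) ≤ 3 / 2)]

lemma measure_le_ediam_rpow (hμ : IsSelfAffineMeasure μ) [IsProbabilityMeasure μ]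
    (s : Set (ℝ × ℝ)) : μ s ≤ 128 * Metric.ediam s ^ (3 / 2 : ℝ) := by
  rcases s.eq_empty_or_nonempty with rfl | ⟨z, hz⟩
  · simp
  by_cases htop : Metric.ediam s = ⊤
  · simp [htop, ENNReal.top_rpow_of_pos]
  set d := (Metric.ediam s).toReal
  have hd : 0 ≤ d := ENNReal.toReal_nonneg
  have hsub : s ⊆ Icc (z.1 - d) (z.1 - d + 2 * d) ×ˢ Icc (z.2 - d) (z.2 - d + 2 * d) := by
    intro w hw
    have hwz : dist w z ≤ d := by
      rw [dist_edist]
      exact ENNReal.toReal_mono htop (Metric.edist_le_ediam_of_mem hw hz)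
    rw [Prod.dist_eq, max_le_iff, Real.dist_eq, Real.dist_eq, abs_le, abs_le] at hwz
    exact ⟨⟨by linarith, by linarith⟩, by linarith, by linarith⟩
  have h2 : (2 : ℝ) ^ (3 / 2 : ℝ) ≤ 4 := by
    refine (Real.rpow_le_rpow_of_exponent_le (by norm_num : (1 : ℝ) ≤ 2)
      (by norm_num : (3 / 2 : ℝ) ≤ 2)).trans_eq ?_
    norm_num [Real.rpow_two]
  calc μ s ≤ ENNReal.ofReal (32 * (2 * d) ^ (3 / 2 : ℝ)) :=
        (measure_mono hsub).trans (hμ.measure_square_le _ _ _)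
    _ ≤ ENNReal.ofReal (128 * d ^ (3 / 2 : ℝ)) := by
        rw [Real.mul_rpow (by norm_num) hd]
        refine ENNReal.ofReal_le_ofReal ?_
        nlinarith [Real.rpow_nonneg hd (3 / 2 : ℝ)]
    _ = 128 * Metric.ediam s ^ (3 / 2 : ℝ) := by
        rw [ENNReal.ofReal_mul (by norm_num), ← ENNReal.ofReal_rpow_of_nonneg hd (by norm_num),
          ENNReal.ofReal_toReal htop]
        norm_num

end IsSelfAffineMeasure

section Attractor

variable {F : Set (ℝ × ℝ)}

lemma selfAffineMap_mem (hFinv : F = ⋃ i : Fin 4, selfAffineMap i '' F) (i : Fin 4) {z : ℝ × ℝ}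
    (hz : z ∈ F) : selfAffineMap i z ∈ F := by
  rw [hFinv]; exact mem_iUnion.2 ⟨i, mem_image_of_mem _ hz⟩

lemma exists_selfAffineMap_eq (hFinv : F = ⋃ i : Fin 4, selfAffineMap i '' F) {z : ℝ × ℝ}
    (hz : z ∈ F) : ∃ i w, w ∈ F ∧ selfAffineMap i w = z := by
  rw [hFinv] at hz
  obtain ⟨i, w, hw, rfl⟩ := mem_iUnion.1 hz
  exact ⟨i, w, hw, rfl⟩

lemma fst_image_eq_Icc (hFc : IsCompact F) (hFne : F.Nonempty) (hFsub : F ⊆ Icc 0 1 ×ˢ Icc 0 1)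
    (hFinv : F = ⋃ i : Fin 4, selfAffineMap i '' F) : Prod.fst '' F = Icc 0 1 := by
  have hsub : Prod.fst '' F ⊆ Icc 0 1 := by
    rintro _ ⟨z, hz, rfl⟩
    exact (hFsub hz).1
  refine hsub.antisymm (Icc_subset_of_digitMap_mem (r := 4) (by norm_num)
    (hFc.image continuous_fst).isClosed (hFne.image _) hsub ?_)
  rintro j hj _ ⟨z, hz, rfl⟩
  exact ⟨_, selfAffineMap_mem hFinv ⟨j, hj⟩ hz, selfAffineMap_fst _ _⟩

lemma exists_mem_of_fst_eq_zero_or_one (hFsub : F ⊆ Icc 0 1 ×ˢ Icc 0 1)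
    (hFinv : F = ⋃ i : Fin 4, selfAffineMap i '' F) {z : ℝ × ℝ} (hz : z ∈ F)
    (h01 : z.1 = 0 ∨ z.1 = 1) : ∃ w ∈ F, w.1 = z.1 ∧ z.2 = (w.2 + z.1) / 2 := by
  obtain ⟨i, w, hw, rfl⟩ := exists_selfAffineMap_eq hFinv hz
  obtain ⟨⟨hw₀, hw₁⟩, -⟩ := hFsub hw
  refine ⟨w, hw, ?_⟩
  simp only [selfAffineMap_fst, selfAffineMap_snd, digitMap] at h01 ⊢
  fin_cases i <;> norm_num at h01 ⊢ <;> rcases h01 with h | h <;> constructor <;> linarith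

lemma eq_of_fst_eq_of_fst_eq_zero_or_one (hFsub : F ⊆ Icc 0 1 ×ˢ Icc 0 1)
    (hFinv : F = ⋃ i : Fin 4, selfAffineMap i '' F) {z w : ℝ × ℝ} (hz : z ∈ F) (hw : w ∈ F)
    (hzw : z.1 = w.1) (h01 : z.1 = 0 ∨ z.1 = 1) : z = w := by
  refine Prod.ext hzw (eq_of_forall_abs_sub_le_inv_two_pow fun n => ?_)
  induction n generalizing z w with
  | zero =>
    obtain ⟨-, hz₀, hz₁⟩ := hFsub hz
    obtain ⟨-, hw₀, hw₁⟩ := hFsub hw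
    rw [pow_zero, abs_le]
    constructor <;> linarith
  | succ n ih =>
    obtain ⟨z', hz', hz'₁, hz'₂⟩ := exists_mem_of_fst_eq_zero_or_one hFsub hFinv hz h01
    obtain ⟨w', hw', hw'₁, hw'₂⟩ := exists_mem_of_fst_eq_zero_or_one hFsub hFinv hw (hzw ▸ h01)
    have := ih hz' hw' (by rw [hz'₁, hw'₁, hzw]) (hz'₁ ▸ h01)
    rw [hz'₂, hw'₂, hzw, ← sub_div, add_sub_add_right_eq_sub, abs_div, abs_two, pow_succ]
    linarith

lemma selfAffineMap_eq_of_fst_eq (hFsub : F ⊆ Icc 0 1 ×ˢ Icc 0 1)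
    (hFinv : F = ⋃ i : Fin 4, selfAffineMap i '' F) {i j : Fin 4} {w w' : ℝ × ℝ} (hw : w ∈ F)
    (hw' : w' ∈ F) (h : (selfAffineMap i w).1 = (selfAffineMap j w').1) (hww' : w.1 = w'.1)
    (h01 : w.1 = 0 ∨ w.1 = 1) : selfAffineMap i w = selfAffineMap j w' := by
  rw [selfAffineMap_fst, selfAffineMap_fst, ← hww'] at h
  obtain rfl : i = j := Fin.ext (digitMap_left_injective four_pos w.1 h)
  rw [eq_of_fst_eq_of_fst_eq_zero_or_one hFsub hFinv hw hw' hww' h01]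

lemma digit_eq_of_pairwise_ne (hFsub : F ⊆ Icc 0 1 ×ˢ Icc 0 1)
    (hFinv : F = ⋃ i : Fin 4, selfAffineMap i '' F) {i₁ i₂ i₃ : Fin 4} {w₁ w₂ w₃ : ℝ × ℝ}
    (hw₁ : w₁ ∈ F) (hw₂ : w₂ ∈ F) (hw₃ : w₃ ∈ F)
    (h₁₂ : (selfAffineMap i₁ w₁).1 = (selfAffineMap i₂ w₂).1)
    (h₁₃ : (selfAffineMap i₁ w₁).1 = (selfAffineMap i₃ w₃).1)
    (n₁₂ : selfAffineMap i₁ w₁ ≠ selfAffineMap i₂ w₂)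
    (n₁₃ : selfAffineMap i₁ w₁ ≠ selfAffineMap i₃ w₃)
    (n₂₃ : selfAffineMap i₂ w₂ ≠ selfAffineMap i₃ w₃) : i₁ = i₂ ∧ i₁ = i₃ := by
  by_contra hdig
  have hbd : ∀ {i j : Fin 4} {w w' : ℝ × ℝ}, w ∈ F → w' ∈ F →
      (selfAffineMap i w).1 = (selfAffineMap j w').1 → i ≠ j → w.1 = 0 ∨ w.1 = 1 :=
    fun hw hw' h hij => eq_zero_or_one_of_digitMap_eq four_pos (Fin.val_injective.ne hij)
      (hFsub hw).1 (hFsub hw').1 (by rwa [selfAffineMap_fst, selfAffineMap_fst] at h)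
  have h₂₃ := h₁₂.symm.trans h₁₃
  obtain ⟨b₁, b₂, b₃⟩ : (w₁.1 = 0 ∨ w₁.1 = 1) ∧ (w₂.1 = 0 ∨ w₂.1 = 1) ∧ (w₃.1 = 0 ∨ w₃.1 = 1) := by
    by_cases e₁₂ : i₁ = i₂
    · have e₂₃ : i₂ ≠ i₃ := fun h => hdig ⟨e₁₂, e₁₂.trans h⟩
      exact ⟨hbd hw₁ hw₃ h₁₃ (e₁₂ ▸ e₂₃), hbd hw₂ hw₃ h₂₃ e₂₃, hbd hw₃ hw₂ h₂₃.symm e₂₃.symm⟩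
    · refine ⟨hbd hw₁ hw₂ h₁₂ e₁₂, hbd hw₂ hw₁ h₁₂.symm (Ne.symm e₁₂), ?_⟩
      by_cases e₁₃ : i₁ = i₃
      · exact hbd hw₃ hw₂ h₂₃.symm (e₁₃ ▸ e₁₂)
      · exact hbd hw₃ hw₁ h₁₃.symm (Ne.symm e₁₃)
  rcases eq_or_eq_or_eq_of_two_values b₁ b₂ b₃ with e | e | e
  · exact n₁₂ (selfAffineMap_eq_of_fst_eq hFsub hFinv hw₁ hw₂ h₁₂ e b₁)
  · exact n₁₃ (selfAffineMap_eq_of_fst_eq hFsub hFinv hw₁ hw₃ h₁₃ e b₁)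
  · exact n₂₃ (selfAffineMap_eq_of_fst_eq hFsub hFinv hw₂ hw₃ h₂₃ e b₂)

lemma abs_snd_sub_snd_le_of_pairwise_ne (hFsub : F ⊆ Icc 0 1 ×ˢ Icc 0 1)
    (hFinv : F = ⋃ i : Fin 4, selfAffineMap i '' F) (n : ℕ) {z₁ z₂ z₃ : ℝ × ℝ} (h₁ : z₁ ∈ F)
    (h₂ : z₂ ∈ F) (h₃ : z₃ ∈ F) (h₁₂ : z₁.1 = z₂.1) (h₁₃ : z₁.1 = z₃.1) (n₁₂ : z₁ ≠ z₂)
    (n₁₃ : z₁ ≠ z₃) (n₂₃ : z₂ ≠ z₃) : |z₁.2 - z₂.2| ≤ 2⁻¹ ^ n := by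
  induction n generalizing z₁ z₂ z₃ with
  | zero =>
    obtain ⟨-, hz₁₀, hz₁₁⟩ := hFsub h₁
    obtain ⟨-, hz₂₀, hz₂₁⟩ := hFsub h₂
    rw [pow_zero, abs_le]
    constructor <;> linarith
  | succ n ih =>
    obtain ⟨i₁, w₁, hw₁, rfl⟩ := exists_selfAffineMap_eq hFinv h₁
    obtain ⟨i₂, w₂, hw₂, rfl⟩ := exists_selfAffineMap_eq hFinv h₂
    obtain ⟨i₃, w₃, hw₃, rfl⟩ := exists_selfAffineMap_eq hFinv h₃
    obtain ⟨rfl, rfl⟩ := digit_eq_of_pairwise_ne hFsub hFinv hw₁ hw₂ hw₃ h₁₂ h₁₃ n₁₂ n₁₃ n₂₃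
    simp only [selfAffineMap_fst] at h₁₂ h₁₃
    have := ih hw₁ hw₂ hw₃ (digitMap_injective four_pos _ h₁₂) (digitMap_injective four_pos _ h₁₃)
      (ne_of_apply_ne _ n₁₂) (ne_of_apply_ne _ n₁₃) (ne_of_apply_ne _ n₂₃)
    rw [selfAffineMap_snd, selfAffineMap_snd, digitMap, digitMap, ← sub_div,
      add_sub_add_right_eq_sub, abs_div, Nat.cast_ofNat, abs_two, pow_succ]
    linarith

lemma exists_vertical_slice_subset_pair (hFsub : F ⊆ Icc 0 1 ×ˢ Icc 0 1)
    (hFinv : F = ⋃ i : Fin 4, selfAffineMap i '' F) (t : ℝ) :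
    ∃ p q : ℝ × ℝ, {z ∈ F | z.1 = t} ⊆ {p, q} := by
  refine exists_subset_pair_of_pairwise_ne fun a ⟨ha, hat⟩ b ⟨hb, hbt⟩ c ⟨hc, hct⟩ nab nac nbc => ?_
  have hab : a.1 = b.1 := hat.trans hbt.symm
  exact nab (Prod.ext hab (eq_of_forall_abs_sub_le_inv_two_pow fun n =>
    abs_snd_sub_snd_le_of_pairwise_ne hFsub hFinv n ha hb hc hab (hat.trans hct.symm) nab nac nbc))

end Attractor

/-- The self-affine counterexample: the attractor `F` of the above IFS satisfies
(1) its natural measure `μ` obeys `μ(Q) ≤ C diam(Q)^{3/2}` for all squares `Q`, whence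
`H^{3/2}(F) > 0`; (2) the projection of `F` to the `x`-axis is `[0,1]`; (3) every vertical
line meets `F` in at most two points, so every vertical slice has Hausdorff dimension `0`. -/
theorem self_affine_counterexample
    (F : Set (ℝ × ℝ)) (hFc : IsCompact F) (hFne : F.Nonempty)
    (hFsub : F ⊆ Icc 0 1 ×ˢ Icc 0 1)
    (hFinv : F = ⋃ i : Fin 4, selfAffineMap i '' F)
    (μ : Measure (ℝ × ℝ)) [IsProbabilityMeasure μ]
    (hμF : μ Fᶜ = 0)
    (hμself : μ = (4 : ℝ≥0∞)⁻¹ • ∑ i : Fin 4, Measure.map (selfAffineMap i) μ) :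
    (∃ C : ℝ, 0 < C ∧ ∀ x y h : ℝ, 0 ≤ h →
        (μ (Icc x (x + h) ×ˢ Icc y (y + h))).toReal ≤ C * (Real.sqrt 2 * h) ^ (3/2 : ℝ)) ∧
    0 < μH[(3/2 : ℝ)] F ∧
    Prod.fst '' F = Icc (0 : ℝ) 1 ∧
    ∀ t : ℝ, (∃ p q : ℝ × ℝ, {z ∈ F | z.1 = t} ⊆ {p, q}) ∧
      dimH {z ∈ F | z.1 = t} = 0 := by
  have hμ : IsSelfAffineMeasure μ :=
    ⟨measure_mono_null (compl_subset_compl.2 hFsub) hμF, hμself⟩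
  have hμF₁ : μ F ≠ 0 := fun h => by
    simpa [h, hμF] using measure_univ_le_add_compl (μ := μ) F
  refine ⟨⟨32, by norm_num, fun x y h h0 => ?_⟩,
    hausdorffMeasure_pos_of_le_mul_ediam_rpow (by simp) hμ.measure_le_ediam_rpow hμF₁,
    fst_image_eq_Icc hFc hFne hFsub hFinv, fun t => ?_⟩
  · have hsqrt : h ≤ Real.sqrt 2 * h := le_mul_of_one_le_left h0 (by norm_num)
    calc (μ (Icc x (x + h) ×ˢ Icc y (y + h))).toReal ≤ 32 * h ^ (3 / 2 : ℝ) :=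
          ENNReal.toReal_le_of_le_ofReal (by positivity) (hμ.measure_square_le x y h)
      _ ≤ 32 * (Real.sqrt 2 * h) ^ (3 / 2 : ℝ) := by gcongr
  · obtain ⟨p, q, hpq⟩ := exists_vertical_slice_subset_pair hFsub hFinv t
    exact ⟨⟨p, q, hpq⟩, nonpos_iff_eq_zero.1 <|
      (dimH_mono hpq).trans_eq ((toFinite _).dimH_zero)⟩
end
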